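/- arXiv:2209.10614 — 9 statements merged into one kernel-verified Lean document; each statement's English description precedes it below -/
import Mathlib

section
/- There exist universal constants C1, C2, C3 > 0 with the following property. Fix an integer n ≥ 1, a cost vector c ∈ ℝ^n with all entries positive, an advice vector x' ∈ ℝ^n with all entries nonnegative, a confidence parameter λ ∈ (0,1), and κ ≥ 1. Then there exists a function F assigning to every finite sequence of rows a_1,…,a_i ∈ ℝ_{≥0}^n a vector F(a_1,…,a_i) ∈ ℝ_{≥0}^n such that: for every m ≥ 1 and every sequence of rows a_1,…,a_m ∈ ℝ_{≥0}^n in which every row is nonzero and, for every coordinate j ∈ {1,…,n}, any two positive entries a_{ij} > 0 and a_{i'j} > 0 satisfy a_{ij} ≤ κ·a_{i'j}, the vectors x^{(i)} := F(a_1,…,a_i) satisfy: (a) x^{(i)} ≤ x^{(i+1)} coordinatewise for every i < m; (b) ⟨a_k, x^{(i)}⟩ ≥ 1 for all k ≤ i ≤ m; (c) for every z ∈ ℝ_{≥0}^n with ⟨a_k, z⟩ ≥ 1 for all k ≤ m, one has c·x^{(m)} ≤ C1·log(2κn/λ)·(c·z) and also c·x^{(m)} ≤ (C2/(1−λ))·(c·x')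 + C3·log(2κn)·(c·z); (d) if ⟨a_k, x'⟩ ≥ 1 for all k ≤ m, then c·x^{(m)} ≤ (C2/(1−λ))·(c·x'). -/
open Finset

namespace LACover

noncomputable section
open Classical Real

variable {n : ℕ}

/-- support of a row -/
def supp (a : Fin n → ℝ) : Finset (Fin n) := Finset.univ.filter (fun j => 0 < a j)

def dd (a : Fin n → ℝ) : ℕ := (supp a).card

def bv (a : Fin n → ℝ) (j : Fin n) : ℝ := if 0 < a j then 1 / (dd a * a j) else 0

def eps (c a : Fin n → ℝ) : ℝ :=
  if h : (supp a).Nonempty then (supp a).inf' h (fun j => c j / a j) else 0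

def stepq (c a : Fin n → ℝ) (q : Fin n → ℝ) : Fin n → ℝ :=
  fun j => if 0 < a j then (q j + bv a j) * Real.exp (a j * eps c a / c j) - bv a j else q j

def jmp (x' a p : Fin n → ℝ) : Fin n → ℝ :=
  fun j => if 0 < a j then max (p j) (2 * x' j) else p j

def cost (c v : Fin n → ℝ) : ℝ := ∑ j, c j * v j

def sat (a p q : Fin n → ℝ) : Prop := 1 ≤ ∑ j, a j * (p j + q j)

def Jc (c x' a p : Fin n → ℝ) : ℝ := cost c (jmp x' a p) - cost c p

def bud (c x' : Fin n → ℝ) (lam : ℝ) (a p q : Fin n → ℝ) : Prop :=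
  cost c p + Jc c x' a p ≤ (1 - lam) * cost c q

def q1f (c x' : Fin n → ℝ) (lam : ℝ) (a p q : Fin n → ℝ) : Fin n → ℝ :=
  (stepq c a)^[sInf {N | sat a p ((stepq c a)^[N] q) ∨
      bud c x' lam a p ((stepq c a)^[N] q)}] q

def q2f (c x' : Fin n → ℝ) (lam : ℝ) (a p q : Fin n → ℝ) : Fin n → ℝ :=
  (stepq c a)^[sInf {N | sat a (jmp x' a p)
      ((stepq c a)^[N] (q1f c x' lam a p q))}] (q1f c x' lam a p q)

def phase (c x' : Fin n → ℝ) (lam : ℝ) (a : Fin n → ℝ)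
    (s : (Fin n → ℝ) × (Fin n → ℝ)) : (Fin n → ℝ) × (Fin n → ℝ) :=
  if (∀ j, 0 ≤ a j) ∧ (supp a).Nonempty ∧ ¬ sat a s.1 s.2 then
    if sat a s.1 (q1f c x' lam a s.1 s.2) then (s.1, q1f c x' lam a s.1 s.2)
    else if sat a (jmp x' a s.1) (q1f c x' lam a s.1 s.2) then
      (jmp x' a s.1, q1f c x' lam a s.1 s.2)
    else (jmp x' a s.1, q2f c x' lam a s.1 s.2)
  else s

def Falg (c x' : Fin n → ℝ) (lam : ℝ) : (i : ℕ) → (Fin i → (Fin n → ℝ)) → (Fin n → ℝ) × (Fin n → ℝ)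
  | 0, _ => (0, 0)
  | (i+1), as => phase c x' lam (as (Fin.last i)) (Falg c x' lam i (fun k => as k.castSucc))

-- basic lemmas
lemma mem_supp_iff {a : Fin n → ℝ} {j : Fin n} : j ∈ supp a ↔ 0 < a j := by
  simp [supp]

lemma dd_pos {a : Fin n → ℝ} (h : (supp a).Nonempty) : 0 < dd a := Finset.card_pos.2 h

lemma dd_le_n (a : Fin n → ℝ) : dd a ≤ n := by
  classical
  calc (supp a).card ≤ (Finset.univ : Finset (Fin n)).card := Finset.card_le_card (Finset.filter_subset _ _)
  _ = n := by simp

lemma bv_nonneg {a : Fin n → ℝ} (j : Fin n) : 0 ≤ bv a j := by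
  unfold bv
  split
  · positivity
  · exact le_refl 0

lemma bv_pos {a : Fin n → ℝ} {j : Fin n} (hj : 0 < a j) (hne : (supp a).Nonempty) :
    0 < bv a j := by
  unfold bv
  rw [if_pos hj]
  have := dd_pos (a := a) hne
  positivity

lemma bv_le_inv {a : Fin n → ℝ} {j : Fin n} (hj : 0 < a j) (hne : (supp a).Nonempty) :
    bv a j ≤ 1 / a j := by
  unfold bv
  rw [if_pos hj]
  have h1 : (1:ℝ) ≤ (dd a : ℝ) := by exact_mod_cast dd_pos hne
  rw [div_le_div_iff₀ (by positivity) hj]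
  nlinarith

lemma sum_a_bv {a : Fin n → ℝ} (hne : (supp a).Nonempty) :
    ∑ j, a j * bv a j = 1 := by
  classical
  have h1 : ∑ j, a j * bv a j = ∑ j ∈ supp a, a j * bv a j := by
    refine (Finset.sum_subset (Finset.subset_univ _) ?_).symm
    intro j _ hj
    rw [mem_supp_iff] at hj
    simp [bv, hj]
  rw [h1]
  have h2 : ∀ j ∈ supp a, a j * bv a j = 1 / (dd a : ℝ) := by
    intro j hj
    rw [mem_supp_iff] at hj
    simp only [bv, if_pos hj]
    have hd : (0:ℝ) < (dd a : ℝ) := by exact_mod_cast dd_pos hne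
    field_simp
  rw [Finset.sum_congr rfl h2, Finset.sum_const, nsmul_eq_mul]
  have : (0:ℝ) < (dd a : ℝ) := by exact_mod_cast dd_pos hne
  rw [dd]
  field_simp

section WithC
variable {c : Fin n → ℝ} (hc : ∀ j, 0 < c j)
include hc

lemma eps_nonneg {a : Fin n → ℝ} (ha0 : ∀ j, 0 ≤ a j) : 0 ≤ eps c a := by
  unfold eps
  split
  · rename_i h
    rw [Finset.le_inf'_iff]
    intro j hj
    rw [mem_supp_iff] at hj
    have := (hc j).le
    positivity
  · exact le_refl 0

omit hc in lemma eps_le {a : Fin n → ℝ} {j : Fin n} (hj : j ∈ supp a) (hne : (supp a).Nonempty) :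
    eps c a ≤ c j / a j := by
  unfold eps
  rw [dif_pos hne]
  exact Finset.inf'_le _ hj

lemma theta_nonneg {a : Fin n → ℝ} (ha0 : ∀ j, 0 ≤ a j) (j : Fin n) :
    0 ≤ a j * eps c a / c j := by
  have h1 := eps_nonneg hc ha0 (a := a)
  have h2 := (hc j).le
  have := ha0 j
  positivity

lemma theta_le_one {a : Fin n → ℝ} {j : Fin n} (hj : 0 < a j) (hne : (supp a).Nonempty) :
    a j * eps c a / c j ≤ 1 := by
  have h1 : eps c a ≤ c j / a j := eps_le (a:=a) (mem_supp_iff.2 hj) hne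
  rw [div_le_one (hc j)]
  calc a j * eps c a ≤ a j * (c j / a j) := by
        exact mul_le_mul_of_nonneg_left h1 hj.le
  _ = c j := by field_simp

omit hc in lemma exists_jstar {a : Fin n → ℝ} (hne : (supp a).Nonempty) :
    ∃ j ∈ supp a, eps c a = c j / a j := by
  obtain ⟨j, hj, hval⟩ := Finset.exists_mem_eq_inf' hne (fun j => c j / a j)
  exact ⟨j, hj, by rw [eps, dif_pos hne, hval]⟩

lemma theta_jstar {a : Fin n → ℝ} {j : Fin n} (hj : 0 < a j)
    (hval : eps c a = c j / a j) : a j * eps c a / c j = 1 := by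
  rw [hval]
  have h1 := (hc j).ne'
  field_simp

-- step basic lemmas
omit hc in lemma stepq_off {a q : Fin n → ℝ} {j : Fin n} (hj : ¬ 0 < a j) : stepq c a q j = q j := by
  simp [stepq, hj]

lemma stepq_ge {a q : Fin n → ℝ} (ha0 : ∀ j, 0 ≤ a j) (hq0 : ∀ j, 0 ≤ q j) (j : Fin n) :
    q j ≤ stepq c a q j := by
  unfold stepq
  split
  · rename_i hj
    have h1 : (1:ℝ) ≤ Real.exp (a j * eps c a / c j) := by
      rw [← Real.exp_zero]
      exact Real.exp_le_exp.2 (theta_nonneg hc ha0 j)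
    have h2 : 0 ≤ q j + bv a j := add_nonneg (hq0 j) (bv_nonneg j)
    nlinarith
  · exact le_refl _

lemma stepq_nonneg {a q : Fin n → ℝ} (ha0 : ∀ j, 0 ≤ a j) (hq0 : ∀ j, 0 ≤ q j) (j : Fin n) :
    0 ≤ stepq c a q j := (hq0 j).trans (stepq_ge hc ha0 hq0 j)

lemma iter_nonneg {a q : Fin n → ℝ} (ha0 : ∀ j, 0 ≤ a j) (hq0 : ∀ j, 0 ≤ q j) (N : ℕ) :
    ∀ j, 0 ≤ (stepq c a)^[N] q j := by
  induction N with
  | zero => simpa using hq0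
  | succ N ih =>
      rw [Function.iterate_succ_apply']
      exact stepq_nonneg hc ha0 ih

lemma iter_ge {a q : Fin n → ℝ} (ha0 : ∀ j, 0 ≤ a j) (hq0 : ∀ j, 0 ≤ q j) (N : ℕ) :
    ∀ j, q j ≤ (stepq c a)^[N] q j := by
  induction N with
  | zero => simp
  | succ N ih =>
      intro j
      rw [Function.iterate_succ_apply']
      exact (ih j).trans (stepq_ge hc ha0 (iter_nonneg hc ha0 hq0 N) j)

omit hc in lemma iter_off {a q : Fin n → ℝ} {j : Fin n} (hj : ¬ 0 < a j) (N : ℕ) :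
    (stepq c a)^[N] q j = q j := by
  induction N with
  | zero => simp
  | succ N ih => rw [Function.iterate_succ_apply', stepq_off hj, ih]

omit hc in lemma step_add_b {a q : Fin n → ℝ} {j : Fin n} (hj : 0 < a j) :
    stepq c a q j + bv a j = (q j + bv a j) * Real.exp (a j * eps c a / c j) := by
  unfold stepq
  rw [if_pos hj]
  ring

omit hc in lemma iter_add_b {a q : Fin n → ℝ} {j : Fin n} (hj : 0 < a j) (N : ℕ) :
    (stepq c a)^[N] q j + bv a j
      = (q j + bv a j) * Real.exp (N * (a j * eps c a / c j)) := by
  induction N with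
  | zero => simp
  | succ N ih =>
      rw [Function.iterate_succ_apply', step_add_b hj, ih, mul_assoc, ← Real.exp_add]
      congr 2
      push_cast
      ring

-- existence of iterations achieving sat / budget
lemma jstar_iter_lb {a q : Fin n → ℝ} {j : Fin n} (hj : 0 < a j)
    (hval : eps c a = c j / a j) (hq0 : 0 ≤ q j) (N : ℕ) :
    (N : ℝ) * bv a j ≤ (stepq c a)^[N] q j := by
  have h1 := iter_add_b (c := c) (q := q) hj N
  rw [theta_jstar hc hj hval, mul_one] at h1
  have h2 : (N : ℝ) + 1 ≤ Real.exp (N : ℝ) := by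
    have := Real.add_one_le_exp (N : ℝ)
    linarith
  have hb := bv_nonneg (a := a) j
  nlinarith

lemma exists_sat_iter {a p q : Fin n → ℝ} (ha0 : ∀ j, 0 ≤ a j) (hne : (supp a).Nonempty)
    (hp0 : ∀ j, 0 ≤ p j) (hq0 : ∀ j, 0 ≤ q j) :
    ∃ N : ℕ, sat a p ((stepq c a)^[N] q) := by
  obtain ⟨j, hjs, hval⟩ := exists_jstar (c := c) hne
  rw [mem_supp_iff] at hjs
  have hb := bv_pos hjs hne
  obtain ⟨N, hN⟩ := exists_nat_gt (1 / (a j * bv a j))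
  refine ⟨N, ?_⟩
  have h1 : (N:ℝ) * bv a j ≤ (stepq c a)^[N] q j := jstar_iter_lb hc hjs hval (hq0 j) N
  have h2 : 1 ≤ a j * ((stepq c a)^[N] q j) := by
    have h3 : 1 / (a j * bv a j) * (a j * bv a j) = 1 := by
      field_simp
    calc (1:ℝ) = 1 / (a j * bv a j) * (a j * bv a j) := h3.symm
    _ ≤ N * (a j * bv a j) := by
        apply mul_le_mul_of_nonneg_right hN.le
        positivity
    _ = a j * ((N:ℝ) * bv a j) := by ring
    _ ≤ a j * ((stepq c a)^[N] q j) := by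
        exact mul_le_mul_of_nonneg_left h1 hjs.le
  unfold sat
  calc (1:ℝ) ≤ a j * ((stepq c a)^[N] q j) := h2
  _ ≤ a j * (p j + (stepq c a)^[N] q j) := by nlinarith [hp0 j]
  _ ≤ ∑ j', a j' * (p j' + (stepq c a)^[N] q j') := by
      apply Finset.single_le_sum (f := fun j' => a j' * (p j' + (stepq c a)^[N] q j'))
        (fun j' _ => by
          have := ha0 j'
          have := hp0 j'
          have := iter_nonneg hc ha0 hq0 N j'
          positivity)
        (Finset.mem_univ j)

lemma exists_bud_iter {x' : Fin n → ℝ} {lam : ℝ} (hlam1 : lam < 1)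
    {a p q : Fin n → ℝ} (ha0 : ∀ j, 0 ≤ a j) (hne : (supp a).Nonempty)
    (hq0 : ∀ j, 0 ≤ q j) :
    ∃ N : ℕ, bud c x' lam a p ((stepq c a)^[N] q) := by
  obtain ⟨j, hjs, hval⟩ := exists_jstar (c := c) hne
  rw [mem_supp_iff] at hjs
  have hb := bv_pos hjs hne
  have hcj := hc j
  have hlampos : 0 < 1 - lam := by linarith
  obtain ⟨N, hN⟩ := exists_nat_gt ((cost c p + Jc c x' a p) / ((1 - lam) * (c j * bv a j)))
  refine ⟨N, ?_⟩
  have h1 : (N:ℝ) * bv a j ≤ (stepq c a)^[N] q j := jstar_iter_lb hc hjs hval (hq0 j) N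
  have h2 : c j * ((stepq c a)^[N] q j) ≤ cost c ((stepq c a)^[N] q) := by
    unfold cost
    apply Finset.single_le_sum (f := fun j' => c j' * ((stepq c a)^[N] q j'))
      (fun j' _ => by
        have := (hc j').le
        have := iter_nonneg hc ha0 hq0 N j'
        positivity)
      (Finset.mem_univ j)
  unfold bud
  have h3 : cost c p + Jc c x' a p ≤ (N:ℝ) * ((1 - lam) * (c j * bv a j)) := by
    rw [div_lt_iff₀ (by positivity)] at hN
    linarith
  calc cost c p + Jc c x' a p ≤ (N:ℝ) * ((1 - lam) * (c j * bv a j)) := h3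
  _ = (1 - lam) * (c j * ((N:ℝ) * bv a j)) := by ring
  _ ≤ (1 - lam) * (c j * ((stepq c a)^[N] q j)) := by
      apply mul_le_mul_of_nonneg_left _ hlampos.le
      exact mul_le_mul_of_nonneg_left h1 hcj.le
  _ ≤ (1 - lam) * cost c ((stepq c a)^[N] q) := by
      exact mul_le_mul_of_nonneg_left h2 hlampos.le

omit hc in lemma exp_sub_one_le {x : ℝ} (hx : 0 ≤ x) : Real.exp x - 1 ≤ x * Real.exp x := by
  have h1 := Real.add_one_le_exp (-x)
  have h2 : Real.exp (-x) = (Real.exp x)⁻¹ := Real.exp_neg x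
  have h3 := Real.exp_pos x
  rw [h2] at h1
  have h4 : (1 - x) * Real.exp x ≤ 1 := by
    calc (1 - x) * Real.exp x = (-x + 1) * Real.exp x := by ring
    _ ≤ (Real.exp x)⁻¹ * Real.exp x := by nlinarith
    _ = 1 := by field_simp
  nlinarith

lemma cost_nonneg {v : Fin n → ℝ} (hv : ∀ j, 0 ≤ v j) : 0 ≤ cost c v := by
  apply Finset.sum_nonneg
  intro j _
  have := (hc j).le
  have := hv j
  positivity

lemma cost_mono {v w : Fin n → ℝ} (h : ∀ j, v j ≤ w j) : cost c v ≤ cost c w := by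
  apply Finset.sum_le_sum
  intro j _
  exact mul_le_mul_of_nonneg_left (h j) (hc j).le

omit hc in lemma unsat_lt {a p q : Fin n → ℝ} (h : ¬ sat a p q) :
    ∑ j, a j * (p j + q j) < 1 := by
  unfold sat at h
  linarith [not_le.1 h]

omit hc in lemma aq_le_sum {a p q : Fin n → ℝ} (ha0 : ∀ j, 0 ≤ a j) (hp0 : ∀ j, 0 ≤ p j)
    (hq0 : ∀ j, 0 ≤ q j) (j : Fin n) :
    a j * q j ≤ ∑ j', a j' * (p j' + q j') := by
  calc a j * q j ≤ a j * (p j + q j) := by nlinarith [ha0 j, hp0 j]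
  _ ≤ ∑ j', a j' * (p j' + q j') := by
      apply Finset.single_le_sum (f := fun j' => a j' * (p j' + q j'))
        (fun j' _ => mul_nonneg (ha0 j') (add_nonneg (hp0 j') (hq0 j'))) (Finset.mem_univ j)

lemma step_cost {a p q : Fin n → ℝ} (ha0 : ∀ j, 0 ≤ a j) (hne : (supp a).Nonempty)
    (hp0 : ∀ j, 0 ≤ p j) (hq0 : ∀ j, 0 ≤ q j) (hunsat : ¬ sat a p q) :
    cost c (stepq c a q) ≤ cost c q + 2 * Real.exp 1 * eps c a := by
  have hE := Real.exp_pos 1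
  have heps := eps_nonneg hc (a := a) ha0
  have key : ∀ j, c j * stepq c a q j ≤
      c j * q j + Real.exp 1 * eps c a * (a j * (q j + bv a j)) := by
    intro j
    by_cases hj : 0 < a j
    · set θ := a j * eps c a / c j with hθdef
      have hθ0 : 0 ≤ θ := theta_nonneg hc ha0 j
      have hθ1 : θ ≤ 1 := theta_le_one hc hj hne
      have hqb : 0 ≤ q j + bv a j := add_nonneg (hq0 j) (bv_nonneg j)
      have h1 : stepq c a q j - q j = (q j + bv a j) * (Real.exp θ - 1) := by
        unfold stepq
        rw [if_pos hj]
        ring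
      have h2 : Real.exp θ - 1 ≤ θ * Real.exp θ := exp_sub_one_le hθ0
      have h3 : Real.exp θ ≤ Real.exp 1 := Real.exp_le_exp.2 hθ1
      have h4 : c j * (stepq c a q j - q j) ≤ c j * ((q j + bv a j) * (θ * Real.exp 1)) := by
        rw [h1]
        apply mul_le_mul_of_nonneg_left _ (hc j).le
        calc (q j + bv a j) * (Real.exp θ - 1) ≤ (q j + bv a j) * (θ * Real.exp θ) := by
              exact mul_le_mul_of_nonneg_left h2 hqb
        _ ≤ (q j + bv a j) * (θ * Real.exp 1) := by
              apply mul_le_mul_of_nonneg_left _ hqb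
              exact mul_le_mul_of_nonneg_left h3 hθ0
      have h5 : c j * θ = a j * eps c a := by
        rw [hθdef]
        field_simp
        exact mul_div_cancel_left₀ _ (hc j).ne'
      have h6 : c j * ((q j + bv a j) * (θ * Real.exp 1)) =
          Real.exp 1 * (c j * θ) * (q j + bv a j) := by ring
      rw [h5] at h6
      have h7 : Real.exp 1 * (a j * eps c a) * (q j + bv a j) =
          Real.exp 1 * eps c a * (a j * (q j + bv a j)) := by ring
      linarith [h4, h6.le, h7.le]
    · rw [stepq_off hj]
      have ha : a j = 0 := le_antisymm (not_lt.1 hj) (ha0 j)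
      rw [ha]
      simp
  have hsum1 : ∑ j, a j * q j ≤ 1 := by
    have h1 : ∑ j, a j * q j ≤ ∑ j, a j * (p j + q j) :=
      Finset.sum_le_sum (fun j _ => by nlinarith [ha0 j, hp0 j])
    linarith [unsat_lt hunsat]
  calc cost c (stepq c a q)
      ≤ ∑ j, (c j * q j + Real.exp 1 * eps c a * (a j * (q j + bv a j))) :=
        Finset.sum_le_sum (fun j _ => key j)
    _ = cost c q + Real.exp 1 * eps c a * (∑ j, (a j * q j + a j * bv a j)) := by
        unfold cost
        rw [Finset.sum_add_distrib, Finset.mul_sum]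
        congr 1
        apply Finset.sum_congr rfl
        intro j _
        ring
    _ = cost c q + Real.exp 1 * eps c a * ((∑ j, a j * q j) + 1) := by
        rw [Finset.sum_add_distrib, sum_a_bv hne]
    _ ≤ cost c q + 2 * Real.exp 1 * eps c a := by
        have h8 : (∑ j, a j * q j) + 1 ≤ 2 := by linarith
        have h9 : (0:ℝ) ≤ Real.exp 1 * eps c a := by positivity
        nlinarith [mul_le_mul_of_nonneg_left h8 h9]

lemma step_dlog {a q : Fin n → ℝ} (ha0 : ∀ j, 0 ≤ a j) (hq0 : ∀ j, 0 ≤ q j)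
    (j : Fin n) (B : ℝ) (hB : 0 < B) (hBb : 0 < a j → B ≤ bv a j) :
    a j * eps c a ≤ c j * (Real.log (stepq c a q j + B) - Real.log (q j + B)) := by
  by_cases hj : 0 < a j
  · set θ := a j * eps c a / c j with hθdef
    have hθ0 : 0 ≤ θ := theta_nonneg hc ha0 j
    have hqB : 0 < q j + B := by linarith [hq0 j]
    have hEθ : 1 ≤ Real.exp θ := by
      rw [← Real.exp_zero]
      exact Real.exp_le_exp.2 hθ0
    have h1 : (q j + B) * Real.exp θ ≤ stepq c a q j + B := by
      unfold stepq
      rw [if_pos hj]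
      have hb := hBb hj
      nlinarith
    have h2 : Real.log (q j + B) + θ ≤ Real.log (stepq c a q j + B) := by
      calc Real.log (q j + B) + θ = Real.log ((q j + B) * Real.exp θ) := by
            rw [Real.log_mul hqB.ne' (Real.exp_ne_zero θ), Real.log_exp]
      _ ≤ Real.log (stepq c a q j + B) := by
            apply Real.log_le_log (by positivity) h1
    have h5 : c j * θ = a j * eps c a := by
      rw [hθdef]
      field_simp
      exact mul_div_cancel_left₀ _ (hc j).ne'
    calc a j * eps c a = c j * θ := h5.symm
    _ ≤ c j * (Real.log (stepq c a q j + B) - Real.log (q j + B)) := by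
        apply mul_le_mul_of_nonneg_left _ (hc j).le
        linarith
  · rw [stepq_off hj]
    have ha : a j = 0 := le_antisymm (not_lt.1 hj) (ha0 j)
    rw [ha]
    simp

lemma step_cap {a p q : Fin n → ℝ} (ha0 : ∀ j, 0 ≤ a j) (hne : (supp a).Nonempty)
    (hp0 : ∀ j, 0 ≤ p j) (hq0 : ∀ j, 0 ≤ q j) (hunsat : ¬ sat a p q)
    {j : Fin n} (hj : 0 < a j) :
    stepq c a q j ≤ 2 * Real.exp 1 / a j := by
  have h1 : a j * q j ≤ ∑ j', a j' * (p j' + q j') := aq_le_sum ha0 hp0 hq0 j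
  have h2 : a j * q j < 1 := lt_of_le_of_lt h1 (unsat_lt hunsat)
  have hq1 : q j ≤ 1 / a j := by
    rw [le_div_iff₀ hj]
    nlinarith
  have hb : bv a j ≤ 1 / a j := bv_le_inv hj hne
  set θ := a j * eps c a / c j with hθdef
  have hθ1 : θ ≤ 1 := theta_le_one hc hj hne
  have hθ0 : 0 ≤ θ := theta_nonneg hc ha0 j
  have h3 : Real.exp θ ≤ Real.exp 1 := Real.exp_le_exp.2 hθ1
  have hE1 : (1:ℝ) ≤ Real.exp 1 := by
    nlinarith [Real.add_one_le_exp (1:ℝ)]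
  have hqb : 0 ≤ q j + bv a j := add_nonneg (hq0 j) (bv_nonneg j)
  have h4 : stepq c a q j ≤ (q j + bv a j) * Real.exp 1 := by
    unfold stepq
    rw [if_pos hj]
    nlinarith [bv_nonneg (a := a) j, Real.exp_pos θ]
  calc stepq c a q j ≤ (q j + bv a j) * Real.exp 1 := h4
  _ ≤ (1 / a j + 1 / a j) * Real.exp 1 := by nlinarith
  _ = 2 * Real.exp 1 / a j := by field_simp; ring

lemma seg_cost {a p q : Fin n → ℝ} (ha0 : ∀ j, 0 ≤ a j) (hne : (supp a).Nonempty)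
    (hp0 : ∀ j, 0 ≤ p j) (hq0 : ∀ j, 0 ≤ q j) (N : ℕ)
    (hun : ∀ k, k < N → ¬ sat a p ((stepq c a)^[k] q)) :
    cost c ((stepq c a)^[N] q) ≤ cost c q + N * (2 * Real.exp 1 * eps c a) := by
  induction N with
  | zero => simp
  | succ N ih =>
      have h1 := ih (fun k hk => hun k (Nat.lt_succ_of_lt hk))
      have h2 : cost c ((stepq c a)^[N+1] q) ≤
          cost c ((stepq c a)^[N] q) + 2 * Real.exp 1 * eps c a := by
        rw [Function.iterate_succ_apply']
        exact step_cost hc ha0 hne hp0 (iter_nonneg hc ha0 hq0 N) (hun N (Nat.lt_succ_self N))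
      push_cast
      push_cast at h1
      linarith

lemma seg_dlog {a q : Fin n → ℝ} (ha0 : ∀ j, 0 ≤ a j) (hq0 : ∀ j, 0 ≤ q j) (N : ℕ)
    (j : Fin n) (B : ℝ) (hB : 0 < B) (hBb : 0 < a j → B ≤ bv a j) :
    a j * ((N : ℝ) * eps c a) ≤
      c j * (Real.log ((stepq c a)^[N] q j + B) - Real.log (q j + B)) := by
  induction N with
  | zero => simp
  | succ N ih =>
      have h2 : a j * eps c a ≤ c j * (Real.log ((stepq c a)^[N+1] q j + B)
          - Real.log ((stepq c a)^[N] q j + B)) := by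
        rw [Function.iterate_succ_apply']
        exact step_dlog hc ha0 (iter_nonneg hc ha0 hq0 N) j B hB hBb
      push_cast
      push_cast at ih
      nlinarith [ih, h2]

lemma seg_cap {a p q : Fin n → ℝ} (ha0 : ∀ j, 0 ≤ a j) (hne : (supp a).Nonempty)
    (hp0 : ∀ j, 0 ≤ p j) (hq0 : ∀ j, 0 ≤ q j) (N : ℕ)
    (hun : ∀ k, k < N → ¬ sat a p ((stepq c a)^[k] q)) (j : Fin n) :
    (stepq c a)^[N] q j = q j ∨ (0 < a j ∧ (stepq c a)^[N] q j ≤ 2 * Real.exp 1 / a j) := by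
  cases N with
  | zero => left; simp
  | succ N =>
      by_cases hj : 0 < a j
      · right
        refine ⟨hj, ?_⟩
        rw [Function.iterate_succ_apply']
        exact step_cap hc ha0 hne hp0 (iter_nonneg hc ha0 hq0 N)
          (hun N (Nat.lt_succ_self N)) hj
      · left
        exact iter_off hj (N+1)

omit hc in lemma jmp_ge {x' a p : Fin n → ℝ} (j : Fin n) : p j ≤ jmp x' a p j := by
  unfold jmp
  split
  · exact le_max_left _ _
  · exact le_refl _

omit hc in lemma jmp_le_2x {x' a p : Fin n → ℝ} (hpx : ∀ j, p j ≤ 2 * x' j) (j : Fin n) :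
    jmp x' a p j ≤ 2 * x' j := by
  unfold jmp
  split
  · exact max_le (hpx j) (le_refl _)
  · exact hpx j

omit hc in lemma jmp_nonneg {x' a p : Fin n → ℝ} (hp0 : ∀ j, 0 ≤ p j) (j : Fin n) :
    0 ≤ jmp x' a p j := (hp0 j).trans (jmp_ge j)

omit hc in lemma cost_jmp {x' a p : Fin n → ℝ} :
    cost c (jmp x' a p) = cost c p + Jc c x' a p := by
  unfold Jc
  ring

lemma Jc_nonneg {x' a p : Fin n → ℝ} : 0 ≤ Jc c x' a p := by
  unfold Jc
  have := cost_mono hc (jmp_ge (x' := x') (a := a) (p := p))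
  linarith

lemma Jc_le {x' a p : Fin n → ℝ} (hp0 : ∀ j, 0 ≤ p j) (hx0 : ∀ j, 0 ≤ x' j) :
    Jc c x' a p ≤ 2 * cost c x' := by
  have h1 : ∀ j, jmp x' a p j ≤ p j + 2 * x' j := by
    intro j
    unfold jmp
    split
    · exact max_le (by linarith [hx0 j]) (by linarith [hp0 j])
    · linarith [hx0 j]
  have h2 : cost c (jmp x' a p) ≤ cost c p + 2 * cost c x' := by
    calc cost c (jmp x' a p) ≤ ∑ j, c j * (p j + 2 * x' j) := cost_mono hc h1
    _ = cost c p + 2 * cost c x' := by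
        unfold cost
        rw [Finset.mul_sum, ← Finset.sum_add_distrib]
        apply Finset.sum_congr rfl
        intro j _
        ring
  unfold Jc
  linarith

lemma cost_le_two_costx {x' p : Fin n → ℝ} (hpx : ∀ j, p j ≤ 2 * x' j) :
    cost c p ≤ 2 * cost c x' := by
  calc cost c p ≤ ∑ j, c j * (2 * x' j) := cost_mono hc hpx
  _ = 2 * cost c x' := by
      unfold cost
      rw [Finset.mul_sum]
      apply Finset.sum_congr rfl
      intro j _
      ring

omit hc in lemma sat_jmp {x' a p q : Fin n → ℝ} (ha0 : ∀ j, 0 ≤ a j) (hx0 : ∀ j, 0 ≤ x' j)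
    (hG : 1 ≤ ∑ j, a j * x' j) (hq0 : ∀ j, 0 ≤ q j) :
    sat a (jmp x' a p) q := by
  unfold sat
  have h1 : ∀ j, a j * (2 * x' j) ≤ a j * (jmp x' a p j + q j) := by
    intro j
    by_cases hj : 0 < a j
    · have h2 : 2 * x' j ≤ jmp x' a p j := by
        unfold jmp
        rw [if_pos hj]
        exact le_max_right _ _
      nlinarith [hq0 j]
    · have ha : a j = 0 := le_antisymm (not_lt.1 hj) (ha0 j)
      rw [ha]
      simp
  calc (1:ℝ) ≤ ∑ j, a j * x' j := hG
  _ ≤ ∑ j, a j * (2 * x' j) := by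
      apply Finset.sum_le_sum
      intro j _
      nlinarith [mul_nonneg (ha0 j) (hx0 j)]
  _ ≤ ∑ j, a j * (jmp x' a p j + q j) := Finset.sum_le_sum (fun j _ => h1 j)

omit hc in lemma sat_mono {a p q p' q' : Fin n → ℝ} (ha0 : ∀ j, 0 ≤ a j)
    (hp : ∀ j, p j ≤ p' j) (hq : ∀ j, q j ≤ q' j) (h : sat a p q) : sat a p' q' := by
  unfold sat at h ⊢
  refine h.trans (Finset.sum_le_sum fun j _ => ?_)
  have := ha0 j
  nlinarith [hp j, hq j]

lemma eps_le_costx {a x' : Fin n → ℝ} (ha0 : ∀ j, 0 ≤ a j) (hne : (supp a).Nonempty)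
    (hx0 : ∀ j, 0 ≤ x' j) (hG : 1 ≤ ∑ j, a j * x' j) :
    eps c a ≤ cost c x' := by
  have heps := eps_nonneg hc (a := a) ha0
  have h1 : ∀ j, eps c a * (a j * x' j) ≤ c j * x' j := by
    intro j
    by_cases hj : 0 < a j
    · have h2 : eps c a ≤ c j / a j := eps_le (a := a) (mem_supp_iff.2 hj) hne
      have h3 : eps c a * a j ≤ c j := by
        rw [le_div_iff₀ hj] at h2
        exact h2
      nlinarith [hx0 j]
    · have ha : a j = 0 := le_antisymm (not_lt.1 hj) (ha0 j)
      rw [ha]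
      nlinarith [hx0 j, (hc j).le]
  calc eps c a = eps c a * 1 := by ring
  _ ≤ eps c a * ∑ j, a j * x' j := by
      exact mul_le_mul_of_nonneg_left hG heps
  _ = ∑ j, eps c a * (a j * x' j) := by rw [Finset.mul_sum]
  _ ≤ ∑ j, c j * x' j := Finset.sum_le_sum (fun j _ => h1 j)

theorem phase_master {x' : Fin n → ℝ} {lam : ℝ} (hx0 : ∀ j, 0 ≤ x' j)
    (hlam0 : 0 < lam) (hlam1 : lam < 1)
    (a p q : Fin n → ℝ) (hp0 : ∀ j, 0 ≤ p j) (hq0 : ∀ j, 0 ≤ q j)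
    (hpx : ∀ j, p j ≤ 2 * x' j) (hbud : cost c p ≤ (1 - lam) * cost c q) :
    ∃ T : ℝ, 0 ≤ T ∧
      (∀ j, p j ≤ (phase c x' lam a (p,q)).1 j) ∧
      (∀ j, q j ≤ (phase c x' lam a (p,q)).2 j) ∧
      (∀ j, 0 ≤ (phase c x' lam a (p,q)).1 j) ∧
      (∀ j, 0 ≤ (phase c x' lam a (p,q)).2 j) ∧
      (∀ j, (phase c x' lam a (p,q)).1 j ≤ 2 * x' j) ∧
      (cost c (phase c x' lam a (p,q)).1 ≤ (1-lam) * cost c (phase c x' lam a (p,q)).2) ∧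
      ((sat a p q ∨ ((∀ j, 0 ≤ a j) ∧ (supp a).Nonempty)) →
        sat a (phase c x' lam a (p,q)).1 (phase c x' lam a (p,q)).2) ∧
      (cost c (phase c x' lam a (p,q)).2 ≤ cost c q + 2 * Real.exp 1 * T) ∧
      (∀ (j : Fin n) (B : ℝ), 0 < B → (0 < a j → B ≤ bv a j) →
        a j * T ≤ c j * (Real.log ((phase c x' lam a (p,q)).2 j + B) - Real.log (q j + B))) ∧
      (∀ j, (phase c x' lam a (p,q)).2 j = q j ∨
        (0 < a j ∧ (phase c x' lam a (p,q)).2 j ≤ 2 * Real.exp 1 / a j)) ∧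
      ((∀ j, 0 ≤ a j) → (1 ≤ ∑ j, a j * x' j) →
        (1-lam) * cost c (phase c x' lam a (p,q)).2 ≤
          max ((1-lam) * cost c q) ((4 + 2*Real.exp 1) * cost c x')) := by
  by_cases hg : (∀ j, 0 ≤ a j) ∧ (supp a).Nonempty ∧ ¬ sat a p q
  case neg =>
    have hph : phase c x' lam a (p,q) = (p, q) := by
      unfold phase
      rw [if_neg]
      exact hg
    refine ⟨0, le_refl 0, ?_⟩
    rw [hph]
    refine ⟨fun j => le_refl _, fun j => le_refl _, hp0, hq0, hpx, hbud, ?_, by simp, ?_, fun j => Or.inl rfl, ?_⟩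
    · rintro (h | ⟨h1, h2⟩)
      · exact h
      · by_contra hns
        exact hg ⟨h1, h2, hns⟩
    · intro j B hB hBb
      simp
    · intro _ _
      exact le_max_left _ _
  case pos =>
    obtain ⟨ha0, hne, hunsat⟩ := hg
    have hg' : (∀ j, 0 ≤ a j) ∧ (supp a).Nonempty ∧ ¬ sat a p q := ⟨ha0, hne, hunsat⟩
    set N1 := sInf {N | sat a p ((stepq c a)^[N] q) ∨
        bud c x' lam a p ((stepq c a)^[N] q)} with hN1def
    have hq1 : q1f c x' lam a p q = (stepq c a)^[N1] q := rfl
    set q1 := (stepq c a)^[N1] q with hq1def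
    have hS1ne : {N | sat a p ((stepq c a)^[N] q) ∨
        bud c x' lam a p ((stepq c a)^[N] q)}.Nonempty := by
      obtain ⟨N, hN⟩ := exists_bud_iter hc hlam1 (x' := x') (p := p) ha0 hne hq0
      exact ⟨N, Or.inr hN⟩
    have hN1mem : sat a p q1 ∨ bud c x' lam a p q1 := Nat.sInf_mem hS1ne
    have hun1 : ∀ k, k < N1 → ¬ sat a p ((stepq c a)^[k] q) := by
      intro k hk
      have h := Nat.notMem_of_lt_sInf (hN1def ▸ hk)
      simp only [Set.mem_setOf_eq, not_or] at h
      exact h.1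
    have hnb1 : ∀ k, k < N1 → ¬ bud c x' lam a p ((stepq c a)^[k] q) := by
      intro k hk
      have h := Nat.notMem_of_lt_sInf (hN1def ▸ hk)
      simp only [Set.mem_setOf_eq, not_or] at h
      exact h.2
    have hq10 : ∀ j, 0 ≤ q1 j := iter_nonneg hc ha0 hq0 N1
    have hqle1 : ∀ j, q j ≤ q1 j := iter_ge hc ha0 hq0 N1
    have heps0 : 0 ≤ eps c a := eps_nonneg hc ha0
    have hE : (0:ℝ) < Real.exp 1 := Real.exp_pos 1
    have hlam0' : (0:ℝ) < 1 - lam := by linarith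
    have hcost1 : cost c q1 ≤ cost c q + N1 * (2 * Real.exp 1 * eps c a) :=
      seg_cost hc ha0 hne hp0 hq0 N1 hun1
    have hdlog1 : ∀ (j : Fin n) (B : ℝ), 0 < B → (0 < a j → B ≤ bv a j) →
        a j * ((N1:ℝ) * eps c a) ≤ c j * (Real.log (q1 j + B) - Real.log (q j + B)) :=
      fun j B hB hBb => seg_dlog hc ha0 hq0 N1 j B hB hBb
    have hcap1 : ∀ j, q1 j = q j ∨ (0 < a j ∧ q1 j ≤ 2 * Real.exp 1 / a j) :=
      seg_cap hc ha0 hne hp0 hq0 N1 hun1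
    have hconsist1 : (1 ≤ ∑ j, a j * x' j) →
        (1-lam) * cost c q1 ≤ max ((1-lam) * cost c q) ((4 + 2*Real.exp 1) * cost c x') := by
      intro hG
      cases' Nat.eq_zero_or_pos N1 with h0 hpos
      · rw [hq1def, h0]
        simp only [Function.iterate_zero, id_eq]
        exact le_max_left _ _
      · obtain ⟨K, hK⟩ := Nat.exists_eq_succ_of_ne_zero hpos.ne'
        have hKlt : K < N1 := by omega
        have hunK : ¬ sat a p ((stepq c a)^[K] q) := hun1 K hKlt
        have hnbK : ¬ bud c x' lam a p ((stepq c a)^[K] q) := hnb1 K hKlt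
        have hstep : cost c q1 ≤ cost c ((stepq c a)^[K] q) + 2 * Real.exp 1 * eps c a := by
          rw [hq1def, hK, Function.iterate_succ_apply']
          exact step_cost hc ha0 hne hp0 (iter_nonneg hc ha0 hq0 K) hunK
        have hnb' : (1-lam) * cost c ((stepq c a)^[K] q) < cost c p + Jc c x' a p := by
          unfold bud at hnbK
          linarith [not_le.1 hnbK]
        have h1 : cost c p ≤ 2 * cost c x' := cost_le_two_costx hc hpx
        have h2 : Jc c x' a p ≤ 2 * cost c x' := Jc_le hc hp0 hx0
        have h3 : eps c a ≤ cost c x' := eps_le_costx hc ha0 hne hx0 hG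
        have h5 : (1-lam) * cost c q1 ≤ (1-lam) * cost c ((stepq c a)^[K] q)
            + (1-lam) * (2 * Real.exp 1 * eps c a) := by nlinarith
        have h6 : (1-lam) * (2 * Real.exp 1 * eps c a) ≤ 2 * Real.exp 1 * cost c x' := by
          have : (1-lam) * (2 * Real.exp 1 * eps c a) ≤ 1 * (2 * Real.exp 1 * eps c a) := by
            apply mul_le_mul_of_nonneg_right (by linarith) (by positivity)
          nlinarith
        refine le_max_of_le_right ?_
        nlinarith
    by_cases hs1 : sat a p q1
    case pos =>
      have hph : phase c x' lam a (p,q) = (p, q1) := by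
        unfold phase
        rw [if_pos (show (∀ j, 0 ≤ a j) ∧ (supp a).Nonempty ∧
          ¬ sat a (p,q).1 (p,q).2 from hg')]
        rw [if_pos (show sat a (p,q).1 (q1f c x' lam a (p,q).1 (p,q).2) from hs1)]
        rfl
      refine ⟨(N1:ℝ) * eps c a, by positivity, ?_⟩
      rw [hph]
      refine ⟨fun j => le_refl _, hqle1, hp0, hq10, hpx, ?_, fun _ => hs1, ?_, hdlog1, hcap1,
        fun _ hG => hconsist1 hG⟩
      · calc cost c p ≤ (1-lam) * cost c q := hbud
        _ ≤ (1-lam) * cost c q1 := by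
            exact mul_le_mul_of_nonneg_left (cost_mono hc hqle1) hlam0'.le
      · calc cost c q1 ≤ cost c q + N1 * (2 * Real.exp 1 * eps c a) := hcost1
        _ = cost c q + 2 * Real.exp 1 * ((N1:ℝ) * eps c a) := by ring
    case neg =>
      have hbud1 : bud c x' lam a p q1 := hN1mem.resolve_left hs1
      have hpj0 : ∀ j, 0 ≤ jmp x' a p j := jmp_nonneg hp0
      have hpjx : ∀ j, jmp x' a p j ≤ 2 * x' j := jmp_le_2x hpx
      have hpjge : ∀ j, p j ≤ jmp x' a p j := jmp_ge
      have hcostj : cost c (jmp x' a p) ≤ (1-lam) * cost c q1 := by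
        rw [cost_jmp]
        exact hbud1
      by_cases hs2 : sat a (jmp x' a p) q1
      case pos =>
        have hph : phase c x' lam a (p,q) = (jmp x' a p, q1) := by
          unfold phase
          rw [if_pos (show (∀ j, 0 ≤ a j) ∧ (supp a).Nonempty ∧
            ¬ sat a (p,q).1 (p,q).2 from hg')]
          rw [if_neg (show ¬ sat a (p,q).1 (q1f c x' lam a (p,q).1 (p,q).2) from hs1)]
          rw [if_pos (show sat a (jmp x' a (p,q).1)
            (q1f c x' lam a (p,q).1 (p,q).2) from hs2)]
          rfl
        refine ⟨(N1:ℝ) * eps c a, by positivity, ?_⟩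
        rw [hph]
        exact ⟨hpjge, hqle1, hpj0, hq10, hpjx, hcostj, fun _ => hs2,
          by calc cost c q1 ≤ cost c q + N1 * (2 * Real.exp 1 * eps c a) := hcost1
            _ = cost c q + 2 * Real.exp 1 * ((N1:ℝ) * eps c a) := by ring,
          hdlog1, hcap1, fun _ hG => hconsist1 hG⟩
      case neg =>
        set N2 := sInf {N | sat a (jmp x' a p) ((stepq c a)^[N] q1)} with hN2def
        have hq2 : q2f c x' lam a p q = (stepq c a)^[N2] q1 := rfl
        set q2 := (stepq c a)^[N2] q1 with hq2def
        have hph : phase c x' lam a (p,q) = (jmp x' a p, q2) := by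
          unfold phase
          rw [if_pos (show (∀ j, 0 ≤ a j) ∧ (supp a).Nonempty ∧
            ¬ sat a (p,q).1 (p,q).2 from hg')]
          rw [if_neg (show ¬ sat a (p,q).1 (q1f c x' lam a (p,q).1 (p,q).2) from hs1)]
          rw [if_neg (show ¬ sat a (jmp x' a (p,q).1)
            (q1f c x' lam a (p,q).1 (p,q).2) from hs2)]
          rfl
        have hS2ne : {N | sat a (jmp x' a p) ((stepq c a)^[N] q1)}.Nonempty :=
          exists_sat_iter hc ha0 hne hpj0 hq10
        have hN2mem : sat a (jmp x' a p) q2 := Nat.sInf_mem hS2ne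
        have hun2 : ∀ k, k < N2 → ¬ sat a (jmp x' a p) ((stepq c a)^[k] q1) := by
          intro k hk
          exact Nat.notMem_of_lt_sInf (hN2def ▸ hk)
        have hq20 : ∀ j, 0 ≤ q2 j := iter_nonneg hc ha0 hq10 N2
        have hqle2 : ∀ j, q1 j ≤ q2 j := iter_ge hc ha0 hq10 N2
        have hcost2 : cost c q2 ≤ cost c q1 + N2 * (2 * Real.exp 1 * eps c a) :=
          seg_cost hc ha0 hne hpj0 hq10 N2 hun2
        refine ⟨((N1:ℝ) + (N2:ℝ)) * eps c a, by positivity, ?_⟩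
        rw [hph]
        refine ⟨hpjge, fun j => (hqle1 j).trans (hqle2 j), hpj0, hq20, hpjx, ?_,
          fun _ => hN2mem, ?_, ?_, ?_, ?_⟩
        · calc cost c (jmp x' a p) ≤ (1-lam) * cost c q1 := hcostj
          _ ≤ (1-lam) * cost c q2 := by
              exact mul_le_mul_of_nonneg_left (cost_mono hc hqle2) hlam0'.le
        · calc cost c q2 ≤ cost c q1 + N2 * (2 * Real.exp 1 * eps c a) := hcost2
          _ ≤ cost c q + N1 * (2 * Real.exp 1 * eps c a)
              + N2 * (2 * Real.exp 1 * eps c a) := by linarith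
          _ = cost c q + 2 * Real.exp 1 * (((N1:ℝ) + (N2:ℝ)) * eps c a) := by ring
        · intro j B hB hBb
          have h1 := hdlog1 j B hB hBb
          have h2 : a j * ((N2:ℝ) * eps c a) ≤
              c j * (Real.log (q2 j + B) - Real.log (q1 j + B)) :=
            seg_dlog hc ha0 hq10 N2 j B hB hBb
          nlinarith [h1, h2]
        · intro j
          have h2 := seg_cap hc ha0 hne hpj0 hq10 N2 hun2 j
          cases' h2 with h2 h2
          · have h3 : q2 j = q1 j := h2
            simp only [h3]
            exact hcap1 j
          · exact Or.inr h2
        · intro ha0' hG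
          exact absurd (sat_jmp ha0 hx0 hG hq10) hs2

theorem Falg_inv {x' : Fin n → ℝ} {lam : ℝ} (hx0 : ∀ j, 0 ≤ x' j)
    (hlam0 : 0 < lam) (hlam1 : lam < 1) :
    ∀ (i : ℕ) (as : Fin i → (Fin n → ℝ)),
      (∀ j, 0 ≤ (Falg c x' lam i as).1 j) ∧ (∀ j, 0 ≤ (Falg c x' lam i as).2 j) ∧
      (∀ j, (Falg c x' lam i as).1 j ≤ 2 * x' j) ∧
      cost c (Falg c x' lam i as).1 ≤ (1 - lam) * cost c (Falg c x' lam i as).2 := by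
  intro i
  induction i with
  | zero =>
      intro as
      refine ⟨fun j => le_refl 0, fun j => le_refl 0, fun j => ?_, ?_⟩
      · show (0:ℝ) ≤ 2 * x' j
        linarith [hx0 j]
      have h0 : cost c (0 : Fin n → ℝ) = 0 := by
        unfold cost
        simp
      show cost c (0 : Fin n → ℝ) ≤ (1 - lam) * cost c (0 : Fin n → ℝ)
      rw [h0]
      simp
  | succ i ih =>
      intro as
      obtain ⟨hp0, hq0, hpx, hbud⟩ := ih (fun k => as k.castSucc)
      obtain ⟨T, _, _, _, h4, h5, h6, h7, _, _, _, _, _⟩ :=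
        phase_master hc hx0 hlam0 hlam1 (as (Fin.last i))
          (Falg c x' lam i (fun k => as k.castSucc)).1
          (Falg c x' lam i (fun k => as k.castSucc)).2 hp0 hq0 hpx hbud
      exact ⟨h4, h5, h6, h7⟩

omit hc in lemma supp_nonempty_of {a : Fin n → ℝ} (ha0 : ∀ j, 0 ≤ a j) (hnz : a ≠ 0) :
    (supp a).Nonempty := by
  rw [Function.ne_iff] at hnz
  obtain ⟨j, hj⟩ := hnz
  exact ⟨j, mem_supp_iff.2 (lt_of_le_of_ne (ha0 j) (by simpa using (Ne.symm hj)))⟩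

omit hc in lemma cost_add {p q : Fin n → ℝ} :
    (∑ j, c j * (p j + q j)) = cost c p + cost c q := by
  unfold cost
  rw [← Finset.sum_add_distrib]
  apply Finset.sum_congr rfl
  intro j _
  ring

end WithC
end
end LACover


set_option maxHeartbeats 2000000 in


/-- Learning-augmented online covering LP (Theorem 1.1 / Theorem 2.1): there is an
online algorithm `F` (mapping each prefix of rows to a nonnegative solution) that is
monotone, feasible, `O(log(κn/λ))`-robust and `O(1/(1−λ))`-consistent, where `κ` bounds
the ratio between any two positive entries in each fixed column. -/
theorem stmt0 :
    ∃ C1 C2 C3 : ℝ, 0 < C1 ∧ 0 < C2 ∧ 0 < C3 ∧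
      ∀ (n : ℕ), 1 ≤ n →
      ∀ (c x' : Fin n → ℝ), (∀ j, 0 < c j) → (∀ j, 0 ≤ x' j) →
      ∀ (lam : ℝ), 0 < lam → lam < 1 →
      ∀ (κ : ℝ), 1 ≤ κ →
      ∃ F : (i : ℕ) → (Fin i → (Fin n → ℝ)) → (Fin n → ℝ),
        -- F always outputs a vector in ℝ_{≥0}^n on sequences of nonnegative rows
        (∀ (i : ℕ) (as : Fin i → (Fin n → ℝ)),
          (∀ k j, 0 ≤ as k j) → ∀ j, 0 ≤ F i as j) ∧
        ∀ (m : ℕ), 1 ≤ m → ∀ (a : ℕ → (Fin n → ℝ)),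
          (∀ k, k < m → ∀ j, 0 ≤ a k j) →
          (∀ k, k < m → a k ≠ 0) →
          (∀ (j : Fin n) (k k' : ℕ), k < m → k' < m →
            0 < a k j → 0 < a k' j → a k j ≤ κ * a k' j) →
          -- (a) monotonicity
          ((∀ i, i < m → ∀ j,
              F i (fun k : Fin i => a k.1) j ≤ F (i + 1) (fun k : Fin (i + 1) => a k.1) j) ∧
          -- (b) feasibility
          (∀ i, i ≤ m → ∀ k, k < i →
              1 ≤ ∑ j, a k j * F i (fun k' : Fin i => a k'.1) j) ∧
          -- (c) robustness and consistency against any feasible z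
          (∀ z : Fin n → ℝ, (∀ j, 0 ≤ z j) → (∀ k, k < m → 1 ≤ ∑ j, a k j * z j) →
            (∑ j, c j * F m (fun k : Fin m => a k.1) j ≤
              C1 * Real.log (2 * κ * (n : ℝ) / lam) * ∑ j, c j * z j) ∧
            (∑ j, c j * F m (fun k : Fin m => a k.1) j ≤
              C2 / (1 - lam) * ∑ j, c j * x' j +
                C3 * Real.log (2 * κ * (n : ℝ)) * ∑ j, c j * z j)) ∧
          -- (d) consistency when the advice is feasible
          ((∀ k, k < m → 1 ≤ ∑ j, a k j * x' j) →
            ∑ j, c j * F m (fun k : Fin m => a k.1) j ≤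
              C2 / (1 - lam) * ∑ j, c j * x' j)) := by
  classical
  refine ⟨100, 100, 100, by norm_num, by norm_num, by norm_num, ?_⟩
  intro n hn c x' hc hx0 lam hlam0 hlam1 κ hκ
  refine ⟨fun i as => fun j => (LACover.Falg c x' lam i as).1 j + (LACover.Falg c x' lam i as).2 j,
    ?_, ?_⟩
  · intro i as _ j
    obtain ⟨h1, h2, _, _⟩ := LACover.Falg_inv hc hx0 hlam0 hlam1 i as
    exact add_nonneg (h1 j) (h2 j)
  · intro m hm a ha0 hanz hκc
    set s : (i : ℕ) → (Fin n → ℝ) × (Fin n → ℝ) :=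
      fun i => LACover.Falg c x' lam i (fun k : Fin i => a k.1) with hs
    have hInv : ∀ i, (∀ j, 0 ≤ (s i).1 j) ∧ (∀ j, 0 ≤ (s i).2 j) ∧
        (∀ j, (s i).1 j ≤ 2 * x' j) ∧
        LACover.cost c (s i).1 ≤ (1 - lam) * LACover.cost c (s i).2 :=
      fun i => LACover.Falg_inv hc hx0 hlam0 hlam1 i _
    have hmaster : ∀ i : ℕ, ∃ T : ℝ, 0 ≤ T ∧
        (∀ j, (s i).1 j ≤ (s (i+1)).1 j) ∧
        (∀ j, (s i).2 j ≤ (s (i+1)).2 j) ∧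
        (∀ j, 0 ≤ (s (i+1)).1 j) ∧
        (∀ j, 0 ≤ (s (i+1)).2 j) ∧
        (∀ j, (s (i+1)).1 j ≤ 2 * x' j) ∧
        (LACover.cost c (s (i+1)).1 ≤ (1-lam) * LACover.cost c (s (i+1)).2) ∧
        ((LACover.sat (a i) (s i).1 (s i).2 ∨
          ((∀ j, 0 ≤ a i j) ∧ (LACover.supp (a i)).Nonempty)) →
          LACover.sat (a i) (s (i+1)).1 (s (i+1)).2) ∧
        (LACover.cost c (s (i+1)).2 ≤ LACover.cost c (s i).2 + 2 * Real.exp 1 * T) ∧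
        (∀ (j : Fin n) (B : ℝ), 0 < B → (0 < a i j → B ≤ LACover.bv (a i) j) →
          a i j * T ≤ c j * (Real.log ((s (i+1)).2 j + B) - Real.log ((s i).2 j + B))) ∧
        (∀ j, (s (i+1)).2 j = (s i).2 j ∨
          (0 < a i j ∧ (s (i+1)).2 j ≤ 2 * Real.exp 1 / a i j)) ∧
        ((∀ j, 0 ≤ a i j) → (1 ≤ ∑ j, a i j * x' j) →
          (1-lam) * LACover.cost c (s (i+1)).2 ≤
            max ((1-lam) * LACover.cost c (s i).2) ((4 + 2*Real.exp 1) * LACover.cost c x')) := by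
      intro i
      obtain ⟨hp0, hq0, hpx, hbud⟩ := hInv i
      exact LACover.phase_master hc hx0 hlam0 hlam1 (a i) (s i).1 (s i).2 hp0 hq0 hpx hbud
    choose T hT0 hmp hmq hps0 hqs0 hpsx hbud' hsat' hcost' hdlog' hcap' hcons' using hmaster
    have hE : (0:ℝ) < Real.exp 1 := Real.exp_pos 1
    have hE3 : Real.exp 1 < 3 := by
      have := Real.exp_one_lt_d9
      linarith
    have hn1 : (1:ℝ) ≤ (n:ℝ) := by exact_mod_cast hn
    have hfeas : ∀ i, i ≤ m → ∀ k, k < i → LACover.sat (a k) ((s i).1) ((s i).2) := by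
      intro i
      induction i with
      | zero => intro _ k hk; omega
      | succ i ih =>
          intro hi k hk
          rcases Nat.lt_succ_iff_lt_or_eq.1 hk with hk' | rfl
          · exact LACover.sat_mono (ha0 k (by omega)) (hmp i) (hmq i) (ih (by omega) k hk')
          · exact hsat' k (Or.inr ⟨ha0 k (by omega),
              LACover.supp_nonempty_of (ha0 k (by omega)) (hanz k (by omega))⟩)
    have hx'c : 0 ≤ LACover.cost c x' := LACover.cost_nonneg hc hx0
    have hcq0 : ∀ i, 0 ≤ LACover.cost c (s i).2 :=
      fun i => LACover.cost_nonneg hc ((hInv i).2.1)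
    have hcost0 : LACover.cost c (s 0).2 = 0 := by
      show LACover.cost c (0 : Fin n → ℝ) = 0
      unfold LACover.cost
      simp
    have hsumcost : ∀ i, LACover.cost c (s i).2 ≤
        2 * Real.exp 1 * ∑ k ∈ Finset.range i, T k := by
      intro i
      induction i with
      | zero => simp [hcost0]
      | succ i ih =>
          have h1 := hcost' i
          rw [Finset.sum_range_succ]
          linarith
    have hcostsplit : (∑ j, c j * ((s m).1 j + (s m).2 j)) =
        LACover.cost c (s m).1 + LACover.cost c (s m).2 := LACover.cost_add
    have hcpm : LACover.cost c (s m).1 ≤ 2 * LACover.cost c x' :=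
      LACover.cost_le_two_costx hc ((hInv m).2.2.1)
    have hbudm : LACover.cost c (s m).1 ≤ (1 - lam) * LACover.cost c (s m).2 :=
      (hInv m).2.2.2
    have hlam1' : (0:ℝ) < 1 - lam := by linarith
    refine ⟨?_, ?_, ?_, ?_⟩
    · intro i hi j
      exact add_le_add (hmp i j) (hmq i j)
    · intro i hi k hk
      have h := hfeas i hi k hk
      unfold LACover.sat at h
      exact h
    · -- robustness
      intro z hz0 hzf
      have hcz : 0 ≤ LACover.cost c z := LACover.cost_nonneg hc hz0
      have hκ0 : (0:ℝ) < κ := by linarith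
      have h2κn : (1:ℝ) < 2 * κ * n := by nlinarith
      have hL2 : 0 < Real.log (2 * κ * n) := Real.log_pos h2κn
      set Λ : ℝ := Real.log (1 + 2 * Real.exp 1 * κ^2 * n) with hΛdef
      have hκn2 : (0:ℝ) < κ^2 * (n:ℝ) := by nlinarith
      have hΛ0 : 0 ≤ Λ := Real.log_nonneg (by nlinarith [mul_pos hE hκn2])
      have hcol : ∀ j, (∑ i ∈ Finset.range m, a i j * T i) ≤ c j * Λ := by
        intro j
        by_cases hex : ∃ r, r < m ∧ 0 < a r j
        · obtain ⟨r, hrm, hra⟩ := hex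
          have hn0 : (0:ℝ) < (n:ℝ) := by linarith
          set B : ℝ := 1 / ((n:ℝ) * κ * a r j) with hBdef
          have hB0 : 0 < B := by
            rw [hBdef]
            positivity
          have hBb : ∀ i, i < m → (0 < a i j → B ≤ LACover.bv (a i) j) := by
            intro i him hia
            unfold LACover.bv
            rw [if_pos hia]
            have hd1 : 0 < LACover.dd (a i) :=
              LACover.dd_pos ⟨j, LACover.mem_supp_iff.2 hia⟩
            have hd1' : (1:ℝ) ≤ (LACover.dd (a i) : ℝ) := by exact_mod_cast hd1
            have hdn : (LACover.dd (a i) : ℝ) ≤ (n:ℝ) := by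
              exact_mod_cast LACover.dd_le_n (a i)
            have hκa : a i j ≤ κ * a r j := hκc j i r him hrm hia hra
            rw [hBdef, div_le_div_iff₀ (by positivity) (by positivity)]
            nlinarith
          have hsumlog : (∑ i ∈ Finset.range m, a i j * T i) ≤
              ∑ i ∈ Finset.range m,
                c j * (Real.log ((s (i+1)).2 j + B) - Real.log ((s i).2 j + B)) := by
            apply Finset.sum_le_sum
            intro i hi
            exact hdlog' i j B hB0 (hBb i (Finset.mem_range.1 hi))
          have htel : ∑ i ∈ Finset.range m,
              (Real.log ((s (i+1)).2 j + B) - Real.log ((s i).2 j + B))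
              = Real.log ((s m).2 j + B) - Real.log ((s 0).2 j + B) :=
            Finset.sum_range_sub (fun i => Real.log ((s i).2 j + B)) m
          have hcapm : ∀ i, i ≤ m → ((s i).2 j = 0 ∨
              ∃ k, k < i ∧ 0 < a k j ∧ (s i).2 j ≤ 2 * Real.exp 1 / a k j) := by
            intro i
            induction i with
            | zero => intro _; left; rfl
            | succ i ih =>
                intro hi
                rcases hcap' i j with h | h
                · rcases ih (by omega) with h0 | ⟨k, hk, hka, hkb⟩
                  · left; rw [h, h0]
                  · right; exact ⟨k, by omega, hka, by rw [h]; exact hkb⟩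
                · right; exact ⟨i, by omega, h.1, h.2⟩
          have hqm : (s m).2 j ≤ 2 * Real.exp 1 * κ / a r j := by
            rcases hcapm m (le_refl m) with h0 | ⟨k, hkm, hka, hkb⟩
            · rw [h0]; positivity
            · have h1 : a r j ≤ κ * a k j := hκc j r k hrm hkm hra hka
              calc (s m).2 j ≤ 2 * Real.exp 1 / a k j := hkb
              _ ≤ 2 * Real.exp 1 * κ / a r j := by
                  rw [div_le_div_iff₀ hka hra]
                  nlinarith
          have hq0j : 0 ≤ (s m).2 j := (hInv m).2.1 j
          have hlogle : Real.log ((s m).2 j + B) - Real.log ((s 0).2 j + B) ≤ Λ := by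
            have h00 : (s 0).2 j = (0:ℝ) := rfl
            rw [h00, zero_add, ← Real.log_div (by positivity) hB0.ne']
            rw [hΛdef]
            apply Real.log_le_log (by positivity)
            have hBinv : ((s m).2 j + B) / B = (s m).2 j * ((n:ℝ) * κ * a r j) + 1 := by
              rw [hBdef]
              field_simp
            rw [hBinv]
            have h2 : (s m).2 j * ((n:ℝ) * κ * a r j) ≤ 2 * Real.exp 1 * κ^2 * n := by
              have h3 : (s m).2 j * ((n:ℝ) * κ * a r j) ≤
                  (2 * Real.exp 1 * κ / a r j) * ((n:ℝ) * κ * a r j) := by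
                apply mul_le_mul_of_nonneg_right hqm (by positivity)
              calc (s m).2 j * ((n:ℝ) * κ * a r j) ≤
                  (2 * Real.exp 1 * κ / a r j) * ((n:ℝ) * κ * a r j) := h3
              _ = 2 * Real.exp 1 * κ^2 * n := by
                  field_simp
            linarith
          calc (∑ i ∈ Finset.range m, a i j * T i) ≤
              ∑ i ∈ Finset.range m,
                c j * (Real.log ((s (i+1)).2 j + B) - Real.log ((s i).2 j + B)) := hsumlog
          _ = c j * (Real.log ((s m).2 j + B) - Real.log ((s 0).2 j + B)) := by
              rw [← Finset.mul_sum, htel]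
          _ ≤ c j * Λ := mul_le_mul_of_nonneg_left hlogle (hc j).le
        · have hz : ∀ i ∈ Finset.range m, a i j * T i = 0 := by
            intro i hi
            have h1 : ¬ 0 < a i j := fun h => hex ⟨i, Finset.mem_range.1 hi, h⟩
            have h2 : a i j = 0 :=
              le_antisymm (not_lt.1 h1) (ha0 i (Finset.mem_range.1 hi) j)
            rw [h2, zero_mul]
          rw [Finset.sum_congr rfl hz]
          rw [Finset.sum_const, smul_zero]
          exact mul_nonneg (hc j).le hΛ0
      have hTsum : (∑ i ∈ Finset.range m, T i) ≤ Λ * LACover.cost c z := by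
        calc ∑ i ∈ Finset.range m, T i
            ≤ ∑ i ∈ Finset.range m, T i * (∑ j, a i j * z j) := by
              apply Finset.sum_le_sum
              intro i hi
              nlinarith [hzf i (Finset.mem_range.1 hi), hT0 i]
        _ = ∑ i ∈ Finset.range m, ∑ j, T i * (a i j * z j) := by
            apply Finset.sum_congr rfl
            intro i _
            rw [Finset.mul_sum]
        _ = ∑ j, ∑ i ∈ Finset.range m, T i * (a i j * z j) := Finset.sum_comm
        _ = ∑ j, (∑ i ∈ Finset.range m, a i j * T i) * z j := by
            apply Finset.sum_congr rfl
            intro j _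
            rw [Finset.sum_mul]
            apply Finset.sum_congr rfl
            intro i _
            ring
        _ ≤ ∑ j, (c j * Λ) * z j := by
            apply Finset.sum_le_sum
            intro j _
            exact mul_le_mul_of_nonneg_right (hcol j) (hz0 j)
        _ = Λ * LACover.cost c z := by
            unfold LACover.cost
            rw [Finset.mul_sum]
            apply Finset.sum_congr rfl
            intro j _
            ring
      have hΛle : Λ ≤ 4 * Real.log (2 * κ * (n:ℝ)) := by
        have haux : (1:ℝ) ≤ κ^2 * n := by nlinarith
        have h1 : (1:ℝ) + 2 * Real.exp 1 * κ^2 * n ≤ (2 * κ * (n:ℝ))^(4:ℕ) := by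
          have h2 : (2 * κ * (n:ℝ))^(4:ℕ) = 16 * (κ^2*n) * (κ^2*n^3) := by ring
          have hκ2 : (1:ℝ) ≤ κ^2 := by nlinarith
          have hn3 : (1:ℝ) ≤ (n:ℝ)^3 := one_le_pow₀ hn1
          have h3 : (1:ℝ) ≤ κ^2 * n^3 := by nlinarith
          nlinarith [mul_le_mul haux h3 (by norm_num) (by positivity)]
        calc Λ ≤ Real.log ((2 * κ * (n:ℝ))^(4:ℕ)) := by
              rw [hΛdef]
              apply Real.log_le_log (by positivity) h1
        _ = 4 * Real.log (2 * κ * (n:ℝ)) := by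
            rw [Real.log_pow]
            norm_num
      have hq2m := hsumcost m
      have hcostq : LACover.cost c (s m).2 ≤ 24 * Real.log (2 * κ * n) * LACover.cost c z := by
        have h1 : LACover.cost c (s m).2 ≤ 2 * Real.exp 1 * (Λ * LACover.cost c z) := by
          calc LACover.cost c (s m).2 ≤ 2 * Real.exp 1 * ∑ k ∈ Finset.range m, T k := hq2m
          _ ≤ 2 * Real.exp 1 * (Λ * LACover.cost c z) := by
              apply mul_le_mul_of_nonneg_left hTsum (by positivity)
        have h2 : Λ * LACover.cost c z ≤ 4 * Real.log (2 * κ * n) * LACover.cost c z :=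
          mul_le_mul_of_nonneg_right hΛle hcz
        have h3 : (0:ℝ) ≤ Real.log (2 * κ * n) * LACover.cost c z := by positivity
        nlinarith
      constructor
      · -- C1 bound
        show (∑ j, c j * ((s m).1 j + (s m).2 j)) ≤
          100 * Real.log (2 * κ * (n:ℝ) / lam) * ∑ j, c j * z j
        rw [hcostsplit]
        have hlogm : Real.log (2 * κ * n) ≤ Real.log (2 * κ * (n:ℝ) / lam) := by
          apply Real.log_le_log (by positivity)
          rw [le_div_iff₀ hlam0]
          nlinarith
        have hcp2 : LACover.cost c (s m).1 ≤ LACover.cost c (s m).2 := by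
          calc LACover.cost c (s m).1 ≤ (1 - lam) * LACover.cost c (s m).2 := hbudm
          _ ≤ LACover.cost c (s m).2 := by nlinarith [hcq0 m]
        have h5 : LACover.cost c (s m).1 + LACover.cost c (s m).2 ≤
            48 * Real.log (2 * κ * n) * LACover.cost c z := by linarith
        calc LACover.cost c (s m).1 + LACover.cost c (s m).2 ≤
            48 * Real.log (2 * κ * n) * LACover.cost c z := h5
        _ ≤ 100 * Real.log (2 * κ * (n:ℝ) / lam) * LACover.cost c z := by
            have h6 : Real.log (2 * κ * n) ≤ Real.log (2 * κ * (n:ℝ) / lam) := hlogm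
            nlinarith [hcz, hL2]
        _ = 100 * Real.log (2 * κ * (n:ℝ) / lam) * ∑ j, c j * z j := rfl
      · -- C2/C3 bound
        show (∑ j, c j * ((s m).1 j + (s m).2 j)) ≤
          100 / (1 - lam) * ∑ j, c j * x' j + 100 * Real.log (2 * κ * (n:ℝ)) * ∑ j, c j * z j
        rw [hcostsplit]
        have h7 : (2:ℝ) ≤ 100 / (1 - lam) := by
          rw [le_div_iff₀ hlam1']
          nlinarith
        have h8 : 2 * LACover.cost c x' ≤ 100 / (1 - lam) * LACover.cost c x' :=
          mul_le_mul_of_nonneg_right h7 hx'c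
        have h9 : 24 * Real.log (2 * κ * n) * LACover.cost c z ≤
            100 * Real.log (2 * κ * n) * LACover.cost c z := by
          nlinarith [hcz, hL2]
        calc LACover.cost c (s m).1 + LACover.cost c (s m).2 ≤
            2 * LACover.cost c x' + 24 * Real.log (2 * κ * n) * LACover.cost c z := by
              linarith
        _ ≤ 100 / (1 - lam) * LACover.cost c x' +
            100 * Real.log (2 * κ * n) * LACover.cost c z := by linarith
        _ = 100 / (1 - lam) * (∑ j, c j * x' j) +
            100 * Real.log (2 * κ * (n:ℝ)) * ∑ j, c j * z j := rfl
    · -- consistency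
      intro hG
      have hcons : ∀ i, i ≤ m → (1-lam) * LACover.cost c (s i).2 ≤
          (4 + 2 * Real.exp 1) * LACover.cost c x' := by
        intro i
        induction i with
        | zero =>
            intro _
            rw [hcost0]
            nlinarith
        | succ i ih =>
            intro hi
            have h1 := hcons' i (ha0 i (by omega)) (hG i (by omega))
            have h2 := ih (by omega)
            exact h1.trans (max_le h2 (le_refl _))
      have hconsm := hcons m (le_refl m)
      show (∑ j, c j * ((s m).1 j + (s m).2 j)) ≤ 100 / (1 - lam) * ∑ j, c j * x' j
      rw [hcostsplit]
      rw [div_mul_eq_mul_div, le_div_iff₀ hlam1']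
      have h10 : (1-lam) * LACover.cost c (s m).1 ≤ LACover.cost c (s m).1 := by
        nlinarith [LACover.cost_nonneg hc ((hInv m).1)]
      show (LACover.cost c (s m).1 + LACover.cost c (s m).2) * (1 - lam) ≤
        100 * LACover.cost c x'
      nlinarith [hcq0 m]
end

section
/- There exist universal constants C1, C2, C3 > 0 with the following property. Fix an integer n ≥ 1, costs c ∈ ℝ^n with all entries positive, an advice vector x' ∈ [0,1]^n, a confidence parameter λ ∈ (0,1), and an integer d with 1 ≤ d ≤ n. Then there exists a function F assigning to every finite sequence F_1,…,F_i of nonempty subsets of {1,…,n} a vector F(F_1,…,F_i) ∈ [0,1]^n such that: for every m ≥ 1 and every sequence F_1,…,F_m of nonempty subsets of {1,…,n} with |F_k| ≤ d for all k, the vectors x^{(i)} := F(F_1,…,F_i) satisfy: (a) x^{(i)} ≤ x^{(i+1)} coordinatewise for every i < m; (b) Σ_{j∈F_k} x^{(i)}_j ≥ 1 for all k ≤ i ≤ m; (c) for every z ∈ [0,1]^n with Σ_{j∈F_k} z_j ≥ 1 for all k ≤ m, one has c·x^{(m)} ≤ C1·log(2d/λ)·(c·z) and also c·x^{(m)} ≤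 (C2/(1−λ))·(c·x') + C3·log(2d)·(c·z); (d) if Σ_{j∈F_k} x'_j ≥ 1 for all k ≤ m, then c·x^{(m)} ≤ (C2/(1−λ))·(c·x'). -/
/-!
The algorithm runs two fractional solutions side by side and outputs their coordinatewise
maximum. The first copies the advice on an arriving element, as long as this keeps its cost
at most `2 log (2d/λ)` times the current fractional optimum; every other element goes to the second,
which raises the sets containing it multiplicatively until it is covered. For every fractional
cover `z`, each such step increases the potential `∑ z_j c_j log (d u_j + 1)` by at least its
rate and the cost by at most twice the rate, so the second solution costs at most
`2 log (2d) · OPT`. If the advice is feasible, an element refused by the first solution was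
refused because of its cost, which then already exceeded this bound on the second solution;
hence both solutions cost at most `c · x'`.
-/

open Finset Real

noncomputable section

namespace OnlineFracSetCover

variable {ι : Type*}

section OptCost

def IsFracCover (E : Set (Finset ι)) (z : ι → ℝ) : Prop :=
  0 ≤ z ∧ z ≤ 1 ∧ ∀ F ∈ E, 1 ≤ ∑ j ∈ F, z j

variable {c z : ι → ℝ} {E E' : Set (Finset ι)}

lemma isFracCover_one (hE : ∀ F ∈ E, F.Nonempty) : IsFracCover E 1 :=
  ⟨zero_le_one, le_rfl, fun F hF => by simpa using (hE F hF).card_pos⟩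

lemma IsFracCover.mono (hz : IsFracCover E' z) (h : E ⊆ E') : IsFracCover E z :=
  ⟨hz.1, hz.2.1, fun F hF => hz.2.2 F (h hF)⟩

variable [Fintype ι]

def optCost (c : ι → ℝ) (E : Set (Finset ι)) : ℝ :=
  ⨅ z : {z // IsFracCover E z}, c ⬝ᵥ (z : ι → ℝ)

lemma optCost_nonneg (hc : 0 ≤ c) : 0 ≤ optCost c E :=
  Real.iInf_nonneg fun z => dotProduct_nonneg_of_nonneg hc z.2.1

lemma optCost_le (hc : 0 ≤ c) (hz : IsFracCover E z) : optCost c E ≤ c ⬝ᵥ z := by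
  refine ciInf_le ⟨0, ?_⟩ (⟨z, hz⟩ : {z // IsFracCover E z})
  rintro _ ⟨w, rfl⟩
  exact dotProduct_nonneg_of_nonneg hc w.2.1

lemma le_mul_optCost {a K : ℝ} (hE : ∀ F ∈ E, F.Nonempty) (hK : 0 ≤ K)
    (h : ∀ z, IsFracCover E z → a ≤ K * c ⬝ᵥ z) : a ≤ K * optCost c E := by
  have : Nonempty {z // IsFracCover E z} := ⟨⟨1, isFracCover_one hE⟩⟩
  rw [optCost, Real.mul_iInf_of_nonneg hK]
  exact le_ciInf fun z => h z z.2

lemma optCost_mono (hc : 0 ≤ c) (hE' : ∀ F ∈ E', F.Nonempty) (h : E ⊆ E') :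
    optCost c E ≤ optCost c E' := by
  have : Nonempty {z // IsFracCover E' z} := ⟨⟨1, isFracCover_one hE'⟩⟩
  exact le_ciInf fun z => optCost_le hc (z.2.mono h)

end OptCost

lemma dotProduct_sup_le [Fintype ι] {c v u : ι → ℝ} (hc : 0 ≤ c) (hv : 0 ≤ v) (hu : 0 ≤ u) :
    c ⬝ᵥ (v ⊔ u) ≤ c ⬝ᵥ v + c ⬝ᵥ u := by
  rw [← dotProduct_add]
  exact dotProduct_le_dotProduct_of_nonneg_left
    (sup_le (le_add_of_nonneg_right hu) (le_add_of_nonneg_left hv)) hc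

lemma exp_sub_one_le_mul_exp (t : ℝ) : exp t - 1 ≤ t * exp t := by
  have h := mul_le_mul_of_nonneg_right (one_sub_le_exp_neg t) (exp_pos t).le
  rw [← exp_add, neg_add_cancel, exp_zero] at h
  linear_combination h

section Potential

variable [Fintype ι] {c u z : ι → ℝ} {d : ℕ}

def potential (c : ι → ℝ) (d : ℕ) (z u : ι → ℝ) : ℝ :=
  ∑ j, z j * c j * log (d * u j + 1)

lemma potential_le (hc : 0 ≤ c) (hd : 1 ≤ d) (hz : 0 ≤ z) (hu₀ : 0 ≤ u) (hu₁ : u ≤ 1) :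
    potential c d z u ≤ log (2 * d) * c ⬝ᵥ z := by
  rw [dotProduct, mul_sum]
  refine sum_le_sum fun j _ => ?_
  have hd' : (1 : ℝ) ≤ d := by exact_mod_cast hd
  have hu₀j : 0 ≤ u j := hu₀ j
  have hu₁j : u j ≤ 1 := hu₁ j
  have hlog : log (d * u j + 1) ≤ log (2 * d) := log_le_log (by positivity) (by nlinarith)
  calc z j * c j * log (d * u j + 1) ≤ z j * c j * log (2 * d) :=
        mul_le_mul_of_nonneg_left hlog (mul_nonneg (hz j) (hc j))
    _ = log (2 * d) * (c j * z j) := by ring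

end Potential

section MultiplicativeStep

variable [DecidableEq ι] {c u z : ι → ℝ} {d : ℕ} {F : Finset ι} {r : ℝ}

/-- Along this update `log (d * u j + 1)` grows at rate `1 / c j` for `j ∈ F`. -/
def expRaise (c : ι → ℝ) (d : ℕ) (u : ι → ℝ) (F : Finset ι) (r : ℝ) : ι → ℝ :=
  F.piecewise (fun j => (u j + (d : ℝ)⁻¹) * exp (r / c j) - (d : ℝ)⁻¹) u

lemma expRaise_zero : expRaise c d u F 0 = u := by
  ext j
  by_cases hj : j ∈ F <;> simp [expRaise, hj]

lemma sum_expRaise :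
    ∑ j ∈ F, expRaise c d u F r j = ∑ j ∈ F, ((u j + (d : ℝ)⁻¹) * exp (r / c j) - (d : ℝ)⁻¹) :=
  sum_congr rfl fun _ hj => piecewise_eq_of_mem _ _ _ hj

lemma le_expRaise (hc : 0 ≤ c) (hu : 0 ≤ u) (hr : 0 ≤ r) : u ≤ expRaise c d u F r := by
  refine le_piecewise_of_le_of_le _ (fun j => ?_) le_rfl
  have hexp : 1 ≤ exp (r / c j) := one_le_exp (div_nonneg hr (hc j))
  have hδ : 0 ≤ u j + (d : ℝ)⁻¹ := add_nonneg (hu j) (by positivity)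
  nlinarith

lemma continuous_sum_expRaise : Continuous fun r => ∑ j ∈ F, expRaise c d u F r j := by
  simp_rw [sum_expRaise]
  fun_prop

lemma exists_one_le_sum_expRaise (hc : ∀ j, 0 < c j) (hd : 0 < d) (hu : 0 ≤ u)
    (hF : F.Nonempty) : ∃ R, 0 ≤ R ∧ 1 ≤ ∑ j ∈ F, expRaise c d u F R j := by
  obtain ⟨j₀, hj₀⟩ := hF
  have hR : 0 ≤ c j₀ * log (d + 1) := mul_nonneg (hc j₀).le (log_nonneg (by simp))
  refine ⟨_, hR, le_trans ?_ (single_le_sum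
    (fun j _ => (hu j).trans (le_expRaise (fun j => (hc j).le) hu hR j)) hj₀)⟩
  rw [expRaise, piecewise_eq_of_mem _ _ _ hj₀, mul_div_cancel_left₀ _ (hc j₀).ne',
    exp_log (by positivity)]
  have hd' : (d : ℝ)⁻¹ * (d + 1) - (d : ℝ)⁻¹ = 1 := by field_simp; ring
  nlinarith [mul_nonneg (hu j₀) (by positivity : (0 : ℝ) ≤ d + 1)]

/-- For `F = ∅` no time qualifies and the value is junk. -/
def mwRate (c : ι → ℝ) (d : ℕ) (u : ι → ℝ) (F : Finset ι) : ℝ :=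
  Classical.epsilon fun r => 0 ≤ r ∧ 1 ≤ ∑ j ∈ F, expRaise c d u F r j ∧
    (r = 0 ∨ ∑ j ∈ F, expRaise c d u F r j = 1)

def mwStep (c : ι → ℝ) (d : ℕ) (u : ι → ℝ) (F : Finset ι) : ι → ℝ :=
  expRaise c d u F (mwRate c d u F)

lemma mwRate_spec (hc : ∀ j, 0 < c j) (hd : 0 < d) (hu : 0 ≤ u) (hF : F.Nonempty) :
    0 ≤ mwRate c d u F ∧ 1 ≤ ∑ j ∈ F, mwStep c d u F j ∧
      (mwRate c d u F = 0 ∨ ∑ j ∈ F, mwStep c d u F j = 1) := by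
  have hex : ∃ r, 0 ≤ r ∧ 1 ≤ ∑ j ∈ F, expRaise c d u F r j ∧
      (r = 0 ∨ ∑ j ∈ F, expRaise c d u F r j = 1) := by
    by_cases h₀ : 1 ≤ ∑ j ∈ F, expRaise c d u F 0 j
    · exact ⟨0, le_rfl, h₀, Or.inl rfl⟩
    obtain ⟨R, hR, h₁⟩ := exists_one_le_sum_expRaise hc hd hu hF
    obtain ⟨r, hr, hr₁⟩ := intermediate_value_Icc hR continuous_sum_expRaise.continuousOn
      ⟨(not_le.1 h₀).le, h₁⟩
    exact ⟨r, hr.1, hr₁.ge, Or.inr hr₁⟩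
  exact Classical.epsilon_spec hex

lemma le_mwStep (hc : ∀ j, 0 < c j) (hd : 0 < d) (hu : 0 ≤ u) (hF : F.Nonempty) :
    u ≤ mwStep c d u F :=
  le_expRaise (fun j => (hc j).le) hu (mwRate_spec hc hd hu hF).1

lemma mwStep_le_one (hc : ∀ j, 0 < c j) (hd : 0 < d) (hu : 0 ≤ u) (hu₁ : u ≤ 1)
    (hF : F.Nonempty) : mwStep c d u F ≤ 1 := by
  obtain ⟨-, -, h | h⟩ := mwRate_spec hc hd hu hF
  · rwa [mwStep, h, expRaise_zero]
  intro j
  by_cases hj : j ∈ F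
  · exact (single_le_sum (fun i _ => (hu i).trans (le_mwStep hc hd hu hF i)) hj).trans h.le
  · simpa [mwStep, expRaise, hj] using hu₁ j

variable [Fintype ι]

lemma dotProduct_expRaise_le (hc : ∀ j, 0 < c j) (hu : 0 ≤ u) :
    c ⬝ᵥ expRaise c d u F r ≤
      c ⬝ᵥ u + r * (∑ j ∈ F, expRaise c d u F r j + #F / d) := by
  have hstep : ∀ j ∈ F, c j * (expRaise c d u F r j - u j) ≤
      r * (expRaise c d u F r j + (d : ℝ)⁻¹) := by
    intro j hj
    have hδ : 0 ≤ u j + (d : ℝ)⁻¹ := add_nonneg (hu j) (by positivity)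
    have hcr : c j * (r / c j) = r := mul_div_cancel₀ r (hc j).ne'
    rw [expRaise, piecewise_eq_of_mem _ _ _ hj]
    calc c j * ((u j + (d : ℝ)⁻¹) * exp (r / c j) - (d : ℝ)⁻¹ - u j)
        = c j * (u j + (d : ℝ)⁻¹) * (exp (r / c j) - 1) := by ring
      _ ≤ c j * (u j + (d : ℝ)⁻¹) * (r / c j * exp (r / c j)) :=
        mul_le_mul_of_nonneg_left (exp_sub_one_le_mul_exp _) (mul_nonneg (hc j).le hδ)
      _ = c j * (r / c j) * ((u j + (d : ℝ)⁻¹) * exp (r / c j) - (d : ℝ)⁻¹ + (d : ℝ)⁻¹) := by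
        ring
      _ = r * ((u j + (d : ℝ)⁻¹) * exp (r / c j) - (d : ℝ)⁻¹ + (d : ℝ)⁻¹) := by rw [hcr]
  have hsupp : c ⬝ᵥ (expRaise c d u F r - u) = ∑ j ∈ F, c j * (expRaise c d u F r j - u j) :=
    (sum_subset (subset_univ F) fun j _ hj => by simp [expRaise, hj]).symm
  calc c ⬝ᵥ expRaise c d u F r = c ⬝ᵥ u + c ⬝ᵥ (expRaise c d u F r - u) := by
        rw [dotProduct_sub]; ring
    _ ≤ c ⬝ᵥ u + ∑ j ∈ F, r * (expRaise c d u F r j + (d : ℝ)⁻¹) := by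
        rw [hsupp]; exact (add_le_add_iff_left _).2 (sum_le_sum hstep)
    _ = c ⬝ᵥ u + r * (∑ j ∈ F, expRaise c d u F r j + #F / d) := by
        rw [← mul_sum, sum_add_distrib, sum_const, nsmul_eq_mul, div_eq_mul_inv]

lemma dotProduct_mwStep_le (hc : ∀ j, 0 < c j) (hd : 0 < d) (hu : 0 ≤ u) (hF : F.Nonempty)
    (hcard : #F ≤ d) : c ⬝ᵥ mwStep c d u F ≤ c ⬝ᵥ u + 2 * mwRate c d u F := by
  obtain ⟨hr, -, h⟩ := mwRate_spec hc hd hu hF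
  have hFd : (#F : ℝ) / d ≤ 1 := div_le_one_of_le₀ (by exact_mod_cast hcard) (by positivity)
  refine (dotProduct_expRaise_le hc hu).trans ?_
  rcases h with h | h
  · simp [h]
  · have hS : ∑ j ∈ F, expRaise c d u F (mwRate c d u F) j = 1 := h
    rw [hS]
    nlinarith

lemma potential_expRaise (hc : ∀ j, 0 < c j) (hd : 0 < d) (hu : 0 ≤ u) :
    potential c d z (expRaise c d u F r) = potential c d z u + r * ∑ j ∈ F, z j := by
  have hterm : ∀ j, z j * c j * log (d * expRaise c d u F r j + 1) =
      z j * c j * log (d * u j + 1) + if j ∈ F then r * z j else 0 := by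
    intro j
    by_cases hj : j ∈ F
    · have hlin : (d : ℝ) * ((u j + (d : ℝ)⁻¹) * exp (r / c j) - (d : ℝ)⁻¹) + 1 =
          (d * u j + 1) * exp (r / c j) := by field_simp; ring
      have hpos : 0 < (d : ℝ) * u j + 1 := by have : 0 ≤ u j := hu j; positivity
      have hcr : c j * (r / c j) = r := mul_div_cancel₀ r (hc j).ne'
      rw [expRaise, piecewise_eq_of_mem _ _ _ hj, hlin, log_mul hpos.ne' (exp_pos _).ne',
        log_exp, if_pos hj]
      linear_combination z j * hcr
    · simp [expRaise, hj]
  simp only [potential, hterm, sum_add_distrib, sum_ite_mem, univ_inter, mul_sum]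

lemma potential_add_mwRate_le (hc : ∀ j, 0 < c j) (hd : 0 < d) (hu : 0 ≤ u)
    (hF : F.Nonempty) (hzF : 1 ≤ ∑ j ∈ F, z j) :
    potential c d z u + mwRate c d u F ≤ potential c d z (mwStep c d u F) := by
  rw [mwStep, potential_expRaise hc hd hu]
  linarith [le_mul_of_one_le_right (mwRate_spec hc hd hu hF).1 hzF]

end MultiplicativeStep

lemma range_fin_eq_image_Iio (Fk : ℕ → Finset ι) (i : ℕ) :
    Set.range (fun k : Fin i => Fk k) = Fk '' Set.Iio i := by
  ext F
  simp [Fin.exists_iff]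

lemma log_two_mul_pos {d : ℕ} (hd : 1 ≤ d) : 0 < log (2 * d) :=
  log_pos (by have : (1 : ℝ) ≤ d := (by exact_mod_cast hd); linarith)

lemma log_two_mul_le_log_div {d : ℕ} {lam : ℝ} (hlam₀ : 0 < lam) (hlam₁ : lam ≤ 1) :
    log (2 * d) ≤ log (2 * d / lam) := by
  rcases Nat.eq_zero_or_pos d with rfl | hd
  · simp
  exact log_le_log (by positivity) (le_div_self (by positivity) hlam₀ hlam₁)

section Algorithm

variable [Fintype ι] [DecidableEq ι]

def AcceptsAdvice (c x' : ι → ℝ) (lam : ℝ) (d : ℕ) (v : ι → ℝ) (F : Finset ι) (opt : ℝ) :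
    Prop :=
  1 ≤ ∑ j ∈ F, x' j ∧ c ⬝ᵥ F.piecewise x' v ≤ 2 * log (2 * d / lam) * opt

open Classical in
def state (c x' : ι → ℝ) (lam : ℝ) (d : ℕ) :
    (i : ℕ) → (Fin i → Finset ι) → (ι → ℝ) × (ι → ℝ)
  | 0, _ => (0, 0)
  | i + 1, Fs =>
    let s := state c x' lam d i (Fs ∘ Fin.castSucc)
    let F := Fs (Fin.last i)
    if AcceptsAdvice c x' lam d s.1 F (optCost c (Set.range Fs)) then (F.piecewise x' s.1, s.2)
    else (s.1, mwStep c d s.2 F)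

def onlineCover (c x' : ι → ℝ) (lam : ℝ) (d : ℕ) (i : ℕ) (Fs : Fin i → Finset ι) : ι → ℝ :=
  (state c x' lam d i Fs).1 ⊔ (state c x' lam d i Fs).2

variable {c x' : ι → ℝ} {lam : ℝ} {d : ℕ}

lemma state_bounds (hc : ∀ j, 0 < c j) (hx' : 0 ≤ x') (hd : 0 < d) :
    ∀ i (Fs : Fin i → Finset ι), (∀ k, (Fs k).Nonempty) →
      0 ≤ (state c x' lam d i Fs).1 ∧ (state c x' lam d i Fs).1 ≤ x' ∧
      0 ≤ (state c x' lam d i Fs).2 ∧ (state c x' lam d i Fs).2 ≤ 1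
  | 0, _, _ => ⟨le_rfl, hx', le_rfl, zero_le_one⟩
  | i + 1, Fs, hFs => by
    obtain ⟨hv₀, hvx, hu₀, hu₁⟩ :=
      state_bounds hc hx' hd i (Fs ∘ Fin.castSucc) fun k => hFs _
    simp only [state]
    split_ifs
    · exact ⟨hv₀.trans (le_piecewise_of_le_of_le _ hvx le_rfl),
        piecewise_le_of_le_of_le _ le_rfl hvx, hu₀, hu₁⟩
    · exact ⟨hv₀, hvx, hu₀.trans (le_mwStep hc hd hu₀ (hFs _)),
        mwStep_le_one hc hd hu₀ hu₁ (hFs _)⟩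

lemma onlineCover_nonneg_and_le_one (hc : ∀ j, 0 < c j) (hx'₀ : 0 ≤ x') (hx'₁ : x' ≤ 1)
    (hd : 0 < d) {i : ℕ} {Fs : Fin i → Finset ι} (hFs : ∀ k, (Fs k).Nonempty) :
    0 ≤ onlineCover c x' lam d i Fs ∧ onlineCover c x' lam d i Fs ≤ 1 := by
  obtain ⟨hv₀, hvx, -, hu₁⟩ := state_bounds (lam := lam) hc hx'₀ hd i Fs hFs
  exact ⟨le_sup_of_le_left hv₀, sup_le (hvx.trans hx'₁) hu₁⟩

section Run

variable (c x' lam d) in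
def run (Fk : ℕ → Finset ι) (i : ℕ) : (ι → ℝ) × (ι → ℝ) :=
  state c x' lam d i fun k => Fk k

variable {Fk : ℕ → Finset ι} {i : ℕ}

open Classical in
lemma run_succ : run c x' lam d Fk (i + 1) =
    if AcceptsAdvice c x' lam d (run c x' lam d Fk i).1 (Fk i)
        (optCost c (Fk '' Set.Iio (i + 1)))
    then ((Fk i).piecewise x' (run c x' lam d Fk i).1, (run c x' lam d Fk i).2)
    else ((run c x' lam d Fk i).1, mwStep c d (run c x' lam d Fk i).2 (Fk i)) := by
  rw [← range_fin_eq_image_Iio]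
  rfl

lemma run_bounds (hc : ∀ j, 0 < c j) (hx' : 0 ≤ x') (hd : 0 < d)
    (hne : ∀ k < i, (Fk k).Nonempty) :
    0 ≤ (run c x' lam d Fk i).1 ∧ (run c x' lam d Fk i).1 ≤ x' ∧
      0 ≤ (run c x' lam d Fk i).2 ∧ (run c x' lam d Fk i).2 ≤ 1 :=
  state_bounds hc hx' hd i _ fun k => hne k k.2

lemma run_le_run_succ (hc : ∀ j, 0 < c j) (hx' : 0 ≤ x') (hd : 0 < d)
    (hne : ∀ k ≤ i, (Fk k).Nonempty) : run c x' lam d Fk i ≤ run c x' lam d Fk (i + 1) := by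
  obtain ⟨-, hvx, hu₀, -⟩ := run_bounds (lam := lam) hc hx' hd fun k hk => hne k hk.le
  rw [run_succ]
  split_ifs
  · exact ⟨le_piecewise_of_le_of_le _ hvx le_rfl, le_rfl⟩
  · exact ⟨le_rfl, le_mwStep hc hd hu₀ (hne i le_rfl)⟩

lemma one_le_sum_run_succ (hc : ∀ j, 0 < c j) (hx' : 0 ≤ x') (hd : 0 < d)
    (hne : ∀ k ≤ i, (Fk k).Nonempty) :
    1 ≤ ∑ j ∈ Fk i, ((run c x' lam d Fk (i + 1)).1 ⊔ (run c x' lam d Fk (i + 1)).2) j := by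
  obtain ⟨-, -, hu₀, -⟩ := run_bounds (lam := lam) hc hx' hd fun k hk => hne k hk.le
  rw [run_succ]
  split_ifs with h
  · calc 1 ≤ ∑ j ∈ Fk i, x' j := h.1
      _ = ∑ j ∈ Fk i, (Fk i).piecewise x' (run c x' lam d Fk i).1 j :=
        (sum_congr rfl fun j hj => piecewise_eq_of_mem (Fk i) x' _ hj).symm
      _ ≤ _ := sum_le_sum fun j _ => le_sup_left
  · exact (mwRate_spec hc hd hu₀ (hne i le_rfl)).2.1.trans (sum_le_sum fun j _ => le_sup_right)

lemma one_le_sum_onlineCover (hc : ∀ j, 0 < c j) (hx' : 0 ≤ x') (hd : 0 < d)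
    (hne : ∀ k < i, (Fk k).Nonempty) :
    ∀ k < i, 1 ≤ ∑ j ∈ Fk k, onlineCover c x' lam d i (fun k : Fin i => Fk k) j := by
  induction i with
  | zero => simp
  | succ i ih =>
    intro k hk
    rcases Nat.lt_succ_iff_lt_or_eq.1 hk with hk | rfl
    · have hmono :=
        run_le_run_succ (lam := lam) hc hx' hd fun k hk => hne k (Nat.lt_succ_of_le hk)
      exact (ih (fun k hk => hne k (hk.trans i.lt_succ_self)) k hk).trans
        (sum_le_sum fun j _ => sup_le_sup (hmono.1 j) (hmono.2 j))
    · exact one_le_sum_run_succ hc hx' hd fun k hk => hne k (Nat.lt_succ_of_le hk)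

lemma dotProduct_run_fst_le (hc : ∀ j, 0 < c j) (hd : 1 ≤ d) (hlam₀ : 0 < lam)
    (hlam₁ : lam ≤ 1) (hne : ∀ k < i, (Fk k).Nonempty) :
    c ⬝ᵥ (run c x' lam d Fk i).1 ≤ 2 * log (2 * d / lam) * optCost c (Fk '' Set.Iio i) := by
  have hL : 0 ≤ log (2 * d / lam) :=
    (log_two_mul_pos hd).le.trans (log_two_mul_le_log_div hlam₀ hlam₁)
  induction i with
  | zero =>
    simpa [run, state] using mul_nonneg (by positivity) (optCost_nonneg fun j => (hc j).le)
  | succ i ih =>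
    rw [run_succ]
    split_ifs with h
    · exact h.2
    · refine (ih fun k hk => hne k (hk.trans i.lt_succ_self)).trans
        (mul_le_mul_of_nonneg_left (optCost_mono (fun j => (hc j).le) ?_ ?_) (by positivity))
      · exact Set.forall_mem_image.2 hne
      · exact Set.image_mono (Set.Iio_subset_Iio i.le_succ)

lemma dotProduct_run_snd_le_potential (hc : ∀ j, 0 < c j) (hx' : 0 ≤ x') (hd : 0 < d)
    {z : ι → ℝ} (hne : ∀ k < i, (Fk k).Nonempty) (hcard : ∀ k < i, #(Fk k) ≤ d)
    (hz : ∀ k < i, 1 ≤ ∑ j ∈ Fk k, z j) :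
    c ⬝ᵥ (run c x' lam d Fk i).2 ≤ 2 * potential c d z (run c x' lam d Fk i).2 := by
  induction i with
  | zero => simp [run, state, potential]
  | succ i ih =>
    have hlt : ∀ k < i, k < i + 1 := fun k hk => hk.trans i.lt_succ_self
    have ih' := ih (fun k hk => hne k (hlt k hk)) (fun k hk => hcard k (hlt k hk))
      fun k hk => hz k (hlt k hk)
    obtain ⟨-, -, hu₀, -⟩ := run_bounds (lam := lam) hc hx' hd fun k hk => hne k (hlt k hk)
    rw [run_succ]
    split_ifs
    · exact ih'
    · linarith [dotProduct_mwStep_le hc hd hu₀ (hne i i.lt_succ_self) (hcard i i.lt_succ_self),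
        potential_add_mwRate_le hc hd hu₀ (hne i i.lt_succ_self) (hz i i.lt_succ_self)]

lemma dotProduct_run_snd_le (hc : ∀ j, 0 < c j) (hx' : 0 ≤ x') (hd : 1 ≤ d)
    (hne : ∀ k < i, (Fk k).Nonempty) (hcard : ∀ k < i, #(Fk k) ≤ d) :
    c ⬝ᵥ (run c x' lam d Fk i).2 ≤ 2 * log (2 * d) * optCost c (Fk '' Set.Iio i) := by
  obtain ⟨-, -, hu₀, hu₁⟩ := run_bounds (lam := lam) hc hx' hd hne
  refine le_mul_optCost (Set.forall_mem_image.2 hne) (by linarith [log_two_mul_pos hd])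
    fun z hz => ?_
  calc c ⬝ᵥ (run c x' lam d Fk i).2 ≤ 2 * potential c d z (run c x' lam d Fk i).2 :=
        dotProduct_run_snd_le_potential hc hx' hd hne hcard fun k hk =>
          hz.2.2 _ (Set.mem_image_of_mem _ hk)
    _ ≤ 2 * (log (2 * d) * c ⬝ᵥ z) := by
        gcongr
        exact potential_le (fun j => (hc j).le) hd hz.1 hu₀ hu₁
    _ = 2 * log (2 * d) * c ⬝ᵥ z := by ring

lemma dotProduct_run_snd_le_of_advice (hc : ∀ j, 0 < c j) (hx' : 0 ≤ x') (hd : 1 ≤ d)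
    (hlam₀ : 0 < lam) (hlam₁ : lam ≤ 1) (hne : ∀ k < i, (Fk k).Nonempty)
    (hcard : ∀ k < i, #(Fk k) ≤ d) (hadv : ∀ k < i, 1 ≤ ∑ j ∈ Fk k, x' j) :
    c ⬝ᵥ (run c x' lam d Fk i).2 ≤ c ⬝ᵥ x' := by
  induction i with
  | zero => simpa [run, state] using dotProduct_nonneg_of_nonneg (fun j => (hc j).le) hx'
  | succ i ih =>
    have hlt : ∀ k < i, k < i + 1 := fun k hk => hk.trans i.lt_succ_self
    obtain ⟨-, hvx, -, -⟩ := run_bounds (lam := lam) hc hx' hd fun k hk => hne k (hlt k hk)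
    have hopt := dotProduct_run_snd_le (lam := lam) hc hx' hd hne hcard
    have hlog := log_two_mul_le_log_div (d := d) hlam₀ hlam₁
    have hopt₀ := optCost_nonneg (E := Fk '' Set.Iio (i + 1)) fun j => (hc j).le
    rw [run_succ] at hopt ⊢
    split_ifs at hopt ⊢ with h
    · exact ih (fun k hk => hne k (hlt k hk)) (fun k hk => hcard k (hlt k hk))
        fun k hk => hadv k (hlt k hk)
    · -- the advice covers `Fk i`, so it was refused only because of its cost
      have hrefused := not_le.1 (not_and.1 h (hadv i i.lt_succ_self))
      calc c ⬝ᵥ _ ≤ 2 * log (2 * d) * optCost c (Fk '' Set.Iio (i + 1)) := hopt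
        _ ≤ 2 * log (2 * d / lam) * optCost c (Fk '' Set.Iio (i + 1)) := by gcongr
        _ ≤ c ⬝ᵥ (Fk i).piecewise x' (run c x' lam d Fk i).1 := hrefused.le
        _ ≤ c ⬝ᵥ x' := dotProduct_le_dotProduct_of_nonneg_left
            (piecewise_le_of_le_of_le _ le_rfl hvx) fun j => (hc j).le

lemma onlineCover_le_succ (hc : ∀ j, 0 < c j) (hx' : 0 ≤ x') (hd : 0 < d)
    (hne : ∀ k ≤ i, (Fk k).Nonempty) :
    onlineCover c x' lam d i (fun k : Fin i => Fk k) ≤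
      onlineCover c x' lam d (i + 1) (fun k : Fin (i + 1) => Fk k) :=
  have hmono := run_le_run_succ (lam := lam) hc hx' hd hne
  sup_le_sup hmono.1 hmono.2

lemma dotProduct_onlineCover_le_of_isFracCover (hc : ∀ j, 0 < c j) (hx' : 0 ≤ x') (hd : 1 ≤ d)
    (hlam₀ : 0 < lam) (hlam₁ : lam ≤ 1) (hne : ∀ k < i, (Fk k).Nonempty)
    (hcard : ∀ k < i, #(Fk k) ≤ d) {z : ι → ℝ} (hz : IsFracCover (Fk '' Set.Iio i) z) :
    c ⬝ᵥ onlineCover c x' lam d i (fun k : Fin i => Fk k) ≤ 4 * log (2 * d / lam) * c ⬝ᵥ z := by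
  obtain ⟨hv₀, -, hu₀, -⟩ := run_bounds (lam := lam) hc hx' hd hne
  have hopt := optCost_le (fun j => (hc j).le) hz
  have hopt₀ := optCost_nonneg (E := Fk '' Set.Iio i) fun j => (hc j).le
  have hlog := log_two_mul_le_log_div (d := d) hlam₀ hlam₁
  have hlog₀ := log_two_mul_pos hd
  calc c ⬝ᵥ onlineCover c x' lam d i (fun k : Fin i => Fk k)
      ≤ c ⬝ᵥ (run c x' lam d Fk i).1 + c ⬝ᵥ (run c x' lam d Fk i).2 :=
        dotProduct_sup_le (fun j => (hc j).le) hv₀ hu₀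
    _ ≤ 2 * log (2 * d / lam) * optCost c (Fk '' Set.Iio i) +
          2 * log (2 * d) * optCost c (Fk '' Set.Iio i) :=
        add_le_add (dotProduct_run_fst_le hc hd hlam₀ hlam₁ hne)
          (dotProduct_run_snd_le hc hx' hd hne hcard)
    _ ≤ 4 * log (2 * d / lam) * optCost c (Fk '' Set.Iio i) := by nlinarith
    _ ≤ 4 * log (2 * d / lam) * c ⬝ᵥ z := by gcongr; linarith

lemma dotProduct_onlineCover_le_advice_add (hc : ∀ j, 0 < c j) (hx' : 0 ≤ x') (hd : 1 ≤ d)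
    (hne : ∀ k < i, (Fk k).Nonempty) (hcard : ∀ k < i, #(Fk k) ≤ d) {z : ι → ℝ}
    (hz : IsFracCover (Fk '' Set.Iio i) z) :
    c ⬝ᵥ onlineCover c x' lam d i (fun k : Fin i => Fk k) ≤
      c ⬝ᵥ x' + 2 * log (2 * d) * c ⬝ᵥ z := by
  obtain ⟨hv₀, hvx, hu₀, -⟩ := run_bounds (lam := lam) hc hx' hd hne
  have hopt := optCost_le (fun j => (hc j).le) hz
  have hlog₀ := log_two_mul_pos hd
  calc c ⬝ᵥ onlineCover c x' lam d i (fun k : Fin i => Fk k)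
      ≤ c ⬝ᵥ (run c x' lam d Fk i).1 + c ⬝ᵥ (run c x' lam d Fk i).2 :=
        dotProduct_sup_le (fun j => (hc j).le) hv₀ hu₀
    _ ≤ c ⬝ᵥ x' + 2 * log (2 * d) * optCost c (Fk '' Set.Iio i) :=
        add_le_add (dotProduct_le_dotProduct_of_nonneg_left hvx fun j => (hc j).le)
          (dotProduct_run_snd_le hc hx' hd hne hcard)
    _ ≤ c ⬝ᵥ x' + 2 * log (2 * d) * c ⬝ᵥ z := by gcongr

lemma dotProduct_onlineCover_le_two_mul_advice (hc : ∀ j, 0 < c j) (hx' : 0 ≤ x')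
    (hd : 1 ≤ d) (hlam₀ : 0 < lam) (hlam₁ : lam ≤ 1) (hne : ∀ k < i, (Fk k).Nonempty)
    (hcard : ∀ k < i, #(Fk k) ≤ d) (hadv : ∀ k < i, 1 ≤ ∑ j ∈ Fk k, x' j) :
    c ⬝ᵥ onlineCover c x' lam d i (fun k : Fin i => Fk k) ≤ 2 * c ⬝ᵥ x' := by
  obtain ⟨hv₀, hvx, hu₀, -⟩ := run_bounds (lam := lam) hc hx' hd hne
  calc c ⬝ᵥ onlineCover c x' lam d i (fun k : Fin i => Fk k)
      ≤ c ⬝ᵥ (run c x' lam d Fk i).1 + c ⬝ᵥ (run c x' lam d Fk i).2 :=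
        dotProduct_sup_le (fun j => (hc j).le) hv₀ hu₀
    _ ≤ c ⬝ᵥ x' + c ⬝ᵥ x' :=
        add_le_add (dotProduct_le_dotProduct_of_nonneg_left hvx fun j => (hc j).le)
          (dotProduct_run_snd_le_of_advice hc hx' hd hlam₀ hlam₁ hne hcard hadv)
    _ = 2 * c ⬝ᵥ x' := by ring

end Run

end Algorithm

end OnlineFracSetCover

end

open OnlineFracSetCover in
/-- Learning-augmented online fractional set cover with fractional advice
(Corollary 2.4): there is an online algorithm `F` (mapping each prefix of arriving
elements, given as nonempty subsets of set indices of size at most `d`, to a fractional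
solution in `[0,1]^n`) that is monotone, feasible, `O(log(d/λ))`-robust and
`O(1/(1−λ))`-consistent. -/
theorem stmt4 :
    ∃ C1 C2 C3 : ℝ, 0 < C1 ∧ 0 < C2 ∧ 0 < C3 ∧
      ∀ (n : ℕ), 1 ≤ n →
      ∀ (c x' : Fin n → ℝ), (∀ j, 0 < c j) → (∀ j, 0 ≤ x' j ∧ x' j ≤ 1) →
      ∀ (lam : ℝ), 0 < lam → lam < 1 →
      ∀ (d : ℕ), 1 ≤ d → d ≤ n →
      ∃ F : (i : ℕ) → (Fin i → Finset (Fin n)) → (Fin n → ℝ),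
        -- F always outputs a vector in [0,1]^n on sequences of nonempty subsets
        (∀ (i : ℕ) (Fs : Fin i → Finset (Fin n)),
          (∀ k, (Fs k).Nonempty) → ∀ j, 0 ≤ F i Fs j ∧ F i Fs j ≤ 1) ∧
        ∀ (m : ℕ), 1 ≤ m → ∀ (Fk : ℕ → Finset (Fin n)),
          (∀ k, k < m → (Fk k).Nonempty) →
          (∀ k, k < m → (Fk k).card ≤ d) →
          -- (a) monotonicity
          ((∀ i, i < m → ∀ j,
              F i (fun k : Fin i => Fk k.1) j ≤ F (i + 1) (fun k : Fin (i + 1) => Fk k.1) j) ∧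
          -- (b) feasibility
          (∀ i, i ≤ m → ∀ k, k < i →
              1 ≤ ∑ j ∈ Fk k, F i (fun k' : Fin i => Fk k'.1) j) ∧
          -- (c) robustness and consistency against any feasible z ∈ [0,1]^n
          (∀ z : Fin n → ℝ, (∀ j, 0 ≤ z j ∧ z j ≤ 1) →
            (∀ k, k < m → 1 ≤ ∑ j ∈ Fk k, z j) →
            (∑ j, c j * F m (fun k : Fin m => Fk k.1) j ≤
              C1 * Real.log (2 * (d : ℝ) / lam) * ∑ j, c j * z j) ∧
            (∑ j, c j * F m (fun k : Fin m => Fk k.1) j ≤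
              C2 / (1 - lam) * ∑ j, c j * x' j +
                C3 * Real.log (2 * (d : ℝ)) * ∑ j, c j * z j)) ∧
          -- (d) consistency when the advice is feasible
          ((∀ k, k < m → 1 ≤ ∑ j ∈ Fk k, x' j) →
            ∑ j, c j * F m (fun k : Fin m => Fk k.1) j ≤
              C2 / (1 - lam) * ∑ j, c j * x' j)) := by
  refine ⟨4, 2, 2, by norm_num, by norm_num, by norm_num, ?_⟩
  intro n _ c x' hc hx' lam hlam₀ hlam₁ d hd _
  have hx'₀ : 0 ≤ x' := fun j => (hx' j).1
  have hcx' : 0 ≤ c ⬝ᵥ x' := dotProduct_nonneg_of_nonneg (fun j => (hc j).le) hx'₀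
  have htwo : 2 ≤ 2 / (1 - lam) := by rw [le_div_iff₀ (by linarith)]; linarith
  refine ⟨onlineCover c x' lam d, fun i Fs hFs j =>
    (onlineCover_nonneg_and_le_one hc hx'₀ (fun j => (hx' j).2) hd hFs).imp (· j) (· j), ?_⟩
  intro m _ Fk hne hcard
  have hne' (i) (hi : i ≤ m) : ∀ k < i, (Fk k).Nonempty := fun k hk => hne k (hk.trans_le hi)
  have hcover (z : Fin n → ℝ) (hz : ∀ j, 0 ≤ z j ∧ z j ≤ 1)
      (hcov : ∀ k < m, 1 ≤ ∑ j ∈ Fk k, z j) : IsFracCover (Fk '' Set.Iio m) z :=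
    ⟨fun j => (hz j).1, fun j => (hz j).2, Set.forall_mem_image.2 hcov⟩
  refine ⟨fun i hi => onlineCover_le_succ hc hx'₀ hd fun k hk => hne k (hk.trans_lt hi),
    fun i hi => one_le_sum_onlineCover hc hx'₀ hd (hne' i hi), fun z hz hcov => ⟨?_, ?_⟩,
    fun hadv => ?_⟩
  · exact dotProduct_onlineCover_le_of_isFracCover hc hx'₀ hd hlam₀ hlam₁.le (hne' m le_rfl)
      hcard (hcover z hz hcov)
  · refine (dotProduct_onlineCover_le_advice_add hc hx'₀ hd (hne' m le_rfl) hcard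
      (hcover z hz hcov)).trans ?_
    exact add_le_add (le_mul_of_one_le_left hcx' (by linarith)) le_rfl
  · exact (dotProduct_onlineCover_le_two_mul_advice hc hx'₀ hd hlam₀ hlam₁.le (hne' m le_rfl)
      hcard hadv).trans (mul_le_mul_of_nonneg_right htwo hcx')
end

section
/- Let t ≥ 0 be an integer, let x_0 ≤ x_1 ≤ … ≤ x_t be real numbers with x_0 ≥ 0, let D_min > 0, and let D_1,…,D_t be real numbers with D_p ≥ D_min for every p ∈ {1,…,t}. Then ∏_{p=1}^{t} (x_p + D_p)/(x_{p−1} + D_p) ≤ (x_t + D_min)/(x_0 + D_min). -/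
/-- Telescoping product bound: for a nondecreasing nonnegative sequence
`x_0 ≤ x_1 ≤ … ≤ x_t` with `x_0 ≥ 0`, and offsets `D_p ≥ D_min > 0` for `1 ≤ p ≤ t`,
`∏_{p=1}^{t} (x_p + D_p)/(x_{p−1} + D_p) ≤ (x_t + D_min)/(x_0 + D_min)`. -/
theorem stmt7 (t : ℕ) (x : ℕ → ℝ) (D : ℕ → ℝ) (Dmin : ℝ)
    (hx0 : 0 ≤ x 0) (hmono : ∀ p, p < t → x p ≤ x (p + 1))
    (hDmin : 0 < Dmin) (hD : ∀ p, 1 ≤ p → p ≤ t → Dmin ≤ D p) :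
    ∏ p ∈ Finset.range t, (x (p + 1) + D (p + 1)) / (x p + D (p + 1)) ≤
      (x t + Dmin) / (x 0 + Dmin) := by
  induction t with
  | zero => simp; rw [div_self (by positivity)]
  | succ n ih =>
    have hxn : ∀ p, p ≤ n + 1 → 0 ≤ x p := by
      intro p hp
      induction p with
      | zero => exact hx0
      | succ q ihq =>
        exact le_trans (ihq (Nat.le_of_succ_le hp)) (hmono q (Nat.lt_of_succ_le hp))
    have hxnn : 0 ≤ x n := hxn n (Nat.le_succ n)
    have hxle : x n ≤ x (n + 1) := hmono n (Nat.lt_succ_self n)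
    have hDn : Dmin ≤ D (n + 1) := hD (n + 1) (Nat.le_add_left 1 n) le_rfl
    have hpos1 : 0 < x n + Dmin := by linarith
    have hpos0 : 0 < x 0 + Dmin := by linarith
    have hposD : 0 < x n + D (n + 1) := by linarith
    have ih' : ∏ p ∈ Finset.range n, (x (p + 1) + D (p + 1)) / (x p + D (p + 1)) ≤
        (x n + Dmin) / (x 0 + Dmin) := by
      apply ih
      · intro p hp; exact hmono p (Nat.lt_succ_of_lt hp)
      · intro p hp1 hpn; exact hD p hp1 (Nat.le_succ_of_le hpn)
    rw [Finset.prod_range_succ]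
    have hfac : (x (n + 1) + D (n + 1)) / (x n + D (n + 1)) ≤
        (x (n + 1) + Dmin) / (x n + Dmin) := by
      rw [div_le_div_iff₀ hposD hpos1]
      nlinarith
    have hprodnn : 0 ≤ ∏ p ∈ Finset.range n, (x (p + 1) + D (p + 1)) / (x p + D (p + 1)) := by
      apply Finset.prod_nonneg
      intro p hp
      have hp' : p < n := Finset.mem_range.mp hp
      have h1 : Dmin ≤ D (p + 1) := hD (p + 1) (Nat.le_add_left 1 p) (Nat.succ_le_succ hp'.le)
      have h2 : 0 ≤ x p := hxn p (by omega)
      have h3 : x p ≤ x (p + 1) := hmono p (by omega)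
      exact div_nonneg (by linarith) (by linarith)
    have hfacnn : 0 ≤ (x (n + 1) + D (n + 1)) / (x n + D (n + 1)) := by
      have := hxn (n + 1) le_rfl
      exact div_nonneg (by linarith) (by linarith)
    calc (∏ p ∈ Finset.range n, (x (p + 1) + D (p + 1)) / (x p + D (p + 1))) *
          ((x (n + 1) + D (n + 1)) / (x n + D (n + 1)))
        ≤ (x n + Dmin) / (x 0 + Dmin) * ((x (n + 1) + Dmin) / (x n + Dmin)) :=
          mul_le_mul ih' hfac hfacnn (by positivity)
      _ = (x (n + 1) + Dmin) / (x 0 + Dmin) := by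
          field_simp
end

section
/- Let n ≥ 1 be an integer, let a, x, x' ∈ ℝ^n have all entries nonnegative, and let λ ∈ [0,1]. Let S := {j ∈ {1,…,n} : x_j < x'_j}. Assume Σ_{j=1}^n a_j x_j < 2, Σ_{k=1}^n a_k > 0, and Σ_{k∈S} a_k x'_k > 0. Then Σ_{j=1}^n a_j · ( x_j + λ/(Σ_{k=1}^n a_k) + (1−λ)·x'_j·[j ∈ S] / (Σ_{k∈S} a_k x'_k) ) ≤ 3, where [j ∈ S] equals 1 if j ∈ S and 0 otherwise. -/
/-! The two increments are normalised so that, weighted by `a`, they contribute exactly `λ` and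
`1 - λ`; the growth rate is therefore `∑ a_j x_j + 1 < 3`. -/

open Finset

theorem Finset.sum_mul_div_sum_self {ι K : Type*} [Field K] (s : Finset ι) (a : ι → K) (c : K)
    (h : ∑ k ∈ s, a k ≠ 0) : ∑ j ∈ s, a j * (c / ∑ k ∈ s, a k) = c := by
  rw [← sum_mul]
  field_simp

theorem Finset.sum_mul_ite_div_sum_filter {ι K : Type*} [Fintype ι] [Field K] (p : ι → Prop)
    [DecidablePred p] (a y : ι → K) (c : K) (h : ∑ k ∈ univ.filter p, a k * y k ≠ 0) :
    ∑ j, a j * (c * y j * (if p j then 1 else 0) / ∑ k ∈ univ.filter p, a k * y k) = c := by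
  have hterm : ∀ j, a j * (c * y j * (if p j then 1 else 0) / ∑ k ∈ univ.filter p, a k * y k)
      = if p j then a j * y j * (c / ∑ k ∈ univ.filter p, a k * y k) else 0 := by
    intro j
    split_ifs <;> ring
  simp only [hterm, ← sum_filter]
  exact sum_mul_div_sum_self _ _ c h

theorem stmt8_general (n : ℕ) (a x x' : Fin n → ℝ)
    (lam : ℝ)
    (hcov : ∑ j, a j * x j < 2)
    (hSig : 0 < ∑ k, a k)
    (hW : 0 < ∑ k ∈ Finset.univ.filter (fun k => x k < x' k), a k * x' k) :
    ∑ j, a j * (x j + lam / (∑ k, a k) +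
        (1 - lam) * x' j * (if x j < x' j then (1 : ℝ) else 0) /
          (∑ k ∈ Finset.univ.filter (fun k => x k < x' k), a k * x' k)) ≤ 3 := by
  have hlam : ∑ j, a j * (lam / ∑ k, a k) = lam := sum_mul_div_sum_self _ a lam hSig.ne'
  have hadvice := sum_mul_ite_div_sum_filter (fun k => x k < x' k) a x' (1 - lam) hW.ne'
  simp only [mul_add, sum_add_distrib, hlam, hadvice]
  linarith

/-- Growth-rate bound for the primal–dual learning-augmented covering LP algorithm:
if the arriving row `a` is satisfied to extent less than `2` by the current solution `x`,
then the total growth rate is at most `3`. Here `S = {j : x_j < x'_j}`. -/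
theorem stmt8 (n : ℕ) (hn : 1 ≤ n) (a x x' : Fin n → ℝ)
    (ha : ∀ j, 0 ≤ a j) (hx : ∀ j, 0 ≤ x j) (hx' : ∀ j, 0 ≤ x' j)
    (lam : ℝ) (hlam0 : 0 ≤ lam) (hlam1 : lam ≤ 1)
    (hcov : ∑ j, a j * x j < 2)
    (hSig : 0 < ∑ k, a k)
    (hW : 0 < ∑ k ∈ Finset.univ.filter (fun k => x k < x' k), a k * x' k) :
    ∑ j, a j * (x j + lam / (∑ k, a k) +
        (1 - lam) * x' j * (if x j < x' j then (1 : ℝ) else 0) /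
          (∑ k ∈ Finset.univ.filter (fun k => x k < x' k), a k * x' k)) ≤ 3 :=
  stmt8_general n a x x' lam hcov hSig hW
end

section
/- Let n ≥ 1 be an integer, let a, x, x' ∈ ℝ^n have all entries nonnegative, let λ ∈ [0,1), and let 0 < a_min ≤ a_max be such that every nonzero entry of a lies in the interval [a_min, a_max]. Let Σ := Σ_{k=1}^n a_k, S := {j : x_j < x'_j}, and W := Σ_{k∈S} a_k x'_k. Assume Σ_{j=1}^n a_j x_j < 2, W > 0, and a_j > 0 for at least one j ∈ S. For each j define T_j := a_j · ( x_j + λ/Σ + (1−λ)·x'_j·[j ∈ S]/W ), where [j ∈ S] equals 1 if j ∈ S and 0 otherwise. Then Σ_{j∉S} T_j ≤ ( (2+λ) / ( a_min·λ/(a_max·n) + (1−λ) ) ) · Σ_{j∈S} T_j. -/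
/-- Consistency argument for the primal–dual learning-augmented covering LP algorithm:
the growth rate not credited to the advice (coordinates with `x_j ≥ x'_j`) is at most a
factor `(2+λ)/(a_min·λ/(a_max·n) + (1−λ))` times the growth rate credited to the advice
(coordinates with `x_j < x'_j`). -/
theorem stmt9 (n : ℕ) (hn : 1 ≤ n) (a x x' : Fin n → ℝ)
    (ha : ∀ j, 0 ≤ a j) (hx : ∀ j, 0 ≤ x j) (hx' : ∀ j, 0 ≤ x' j)
    (lam : ℝ) (hlam0 : 0 ≤ lam) (hlam1 : lam < 1)
    (amin amax : ℝ) (hamin : 0 < amin) (haminmax : amin ≤ amax)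
    (hbound : ∀ j, a j ≠ 0 → amin ≤ a j ∧ a j ≤ amax)
    (hcov : ∑ j, a j * x j < 2)
    (hW : 0 < ∑ k ∈ Finset.univ.filter (fun k => x k < x' k), a k * x' k)
    (hS : ∃ j, x j < x' j ∧ 0 < a j) :
    ∑ j ∈ Finset.univ.filter (fun j => ¬ x j < x' j),
        a j * (x j + lam / (∑ k, a k) +
          (1 - lam) * x' j * (if x j < x' j then (1 : ℝ) else 0) /
            (∑ k ∈ Finset.univ.filter (fun k => x k < x' k), a k * x' k)) ≤
      ((2 + lam) / (amin * lam / (amax * n) + (1 - lam))) *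
        ∑ j ∈ Finset.univ.filter (fun j => x j < x' j),
          a j * (x j + lam / (∑ k, a k) +
            (1 - lam) * x' j * (if x j < x' j then (1 : ℝ) else 0) /
              (∑ k ∈ Finset.univ.filter (fun k => x k < x' k), a k * x' k)) := by
  classical
  set S := Finset.univ.filter (fun k => x k < x' k) with hSdef
  set Asum := ∑ k, a k with hAdef
  set W := ∑ k ∈ S, a k * x' k with hWdef
  obtain ⟨j0, hj0lt, hj0a⟩ := hS
  have hj0mem : j0 ∈ S := by simp [hSdef, hj0lt]
  have hApos : 0 < Asum :=
    Finset.sum_pos' (fun i _ => ha i) ⟨j0, Finset.mem_univ _, hj0a⟩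
  have hamax : 0 < amax := lt_of_lt_of_le hamin haminmax
  have hnpos : (0:ℝ) < n := by exact_mod_cast Nat.lt_of_lt_of_le Nat.zero_lt_one hn
  have hamaxn : 0 < amax * n := mul_pos hamax hnpos
  -- bound sum of a over S from below
  have haj0 : amin ≤ a j0 := (hbound j0 (ne_of_gt hj0a)).1
  have hSa : amin ≤ ∑ k ∈ S, a k :=
    le_trans haj0 (Finset.single_le_sum (fun i _ => ha i) hj0mem)
  -- bound Asum from above
  have hAle : Asum ≤ amax * n := by
    have : Asum ≤ ∑ _k : Fin n, amax := by
      apply Finset.sum_le_sum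
      intro i _
      by_cases h : a i = 0
      · rw [h]; exact le_of_lt hamax
      · exact (hbound i h).2
    simpa [mul_comm] using this
  -- denominator D
  set D := amin * lam / (amax * n) + (1 - lam) with hDdef
  have hD1 : 0 ≤ amin * lam / (amax * n) :=
    div_nonneg (mul_nonneg (le_of_lt hamin) hlam0) (le_of_lt hamaxn)
  have hDpos : 0 < D := by
    have : 0 < 1 - lam := by linarith
    positivity
  -- LHS bound
  have hLHS : ∑ j ∈ Finset.univ.filter (fun j => ¬ x j < x' j),
      a j * (x j + lam / Asum + (1 - lam) * x' j * (if x j < x' j then (1:ℝ) else 0) / W)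
      ≤ 2 + lam := by
    have hcongr : ∑ j ∈ Finset.univ.filter (fun j => ¬ x j < x' j),
        a j * (x j + lam / Asum + (1 - lam) * x' j * (if x j < x' j then (1:ℝ) else 0) / W)
        = ∑ j ∈ Finset.univ.filter (fun j => ¬ x j < x' j),
        (a j * x j + lam * (a j / Asum)) := by
      apply Finset.sum_congr rfl
      intro j hj
      rw [Finset.mem_filter] at hj
      rw [if_neg hj.2]
      ring
    rw [hcongr, Finset.sum_add_distrib]
    have h1 : ∑ j ∈ Finset.univ.filter (fun j => ¬ x j < x' j), a j * x j ≤ 2 := by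
      refine le_of_lt (lt_of_le_of_lt ?_ hcov)
      exact Finset.sum_le_sum_of_subset_of_nonneg (Finset.filter_subset _ _)
        (fun i _ _ => mul_nonneg (ha i) (hx i))
    have h2 : ∑ j ∈ Finset.univ.filter (fun j => ¬ x j < x' j), lam * (a j / Asum) ≤ lam := by
      have hsub : ∑ j ∈ Finset.univ.filter (fun j => ¬ x j < x' j), a j ≤ Asum :=
        Finset.sum_le_sum_of_subset_of_nonneg (Finset.filter_subset _ _)
          (fun i _ _ => ha i)
      calc ∑ j ∈ Finset.univ.filter (fun j => ¬ x j < x' j), lam * (a j / Asum)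
          = lam * ((∑ j ∈ Finset.univ.filter (fun j => ¬ x j < x' j), a j) / Asum) := by
            rw [← Finset.mul_sum, Finset.sum_div]
        _ ≤ lam * 1 := by
            apply mul_le_mul_of_nonneg_left _ hlam0
            rw [div_le_one hApos]; exact hsub
        _ = lam := mul_one lam
    linarith
  -- RHS lower bound
  have hRHS : D ≤ ∑ j ∈ S,
      a j * (x j + lam / Asum + (1 - lam) * x' j * (if x j < x' j then (1:ℝ) else 0) / W) := by
    have hcongr : ∑ j ∈ S,
        a j * (x j + lam / Asum + (1 - lam) * x' j * (if x j < x' j then (1:ℝ) else 0) / W)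
        = ∑ j ∈ S, (a j * x j + lam * (a j / Asum) + (1 - lam) * (a j * x' j / W)) := by
      apply Finset.sum_congr rfl
      intro j hj
      rw [hSdef, Finset.mem_filter] at hj
      rw [if_pos hj.2]
      ring
    rw [hcongr]
    have e1 : ∑ j ∈ S, (a j * x j + lam * (a j / Asum) + (1 - lam) * (a j * x' j / W))
        = (∑ j ∈ S, a j * x j) + lam * ((∑ j ∈ S, a j) / Asum)
          + (1 - lam) * ((∑ j ∈ S, a j * x' j) / W) := by
      rw [Finset.sum_add_distrib, Finset.sum_add_distrib, ← Finset.mul_sum, ← Finset.mul_sum,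
        ← Finset.sum_div, ← Finset.sum_div]
    rw [e1]
    have hWW : (∑ j ∈ S, a j * x' j) / W = 1 := by
      rw [← hWdef, div_self (ne_of_gt hW)]
    rw [hWW, mul_one]
    have hxx : 0 ≤ ∑ j ∈ S, a j * x j :=
      Finset.sum_nonneg (fun i _ => mul_nonneg (ha i) (hx i))
    have hfrac : amin * lam / (amax * n) ≤ lam * ((∑ j ∈ S, a j) / Asum) := by
      have h1 : amin / (amax * n) ≤ (∑ j ∈ S, a j) / Asum :=
        div_le_div₀ (Finset.sum_nonneg (fun i _ => ha i)) hSa hApos hAle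
      calc amin * lam / (amax * n) = lam * (amin / (amax * n)) := by ring
        _ ≤ lam * ((∑ j ∈ S, a j) / Asum) := mul_le_mul_of_nonneg_left h1 hlam0
    rw [hDdef]
    linarith
  -- combine
  have hfactor : 0 ≤ (2 + lam) / D := div_nonneg (by linarith) (le_of_lt hDpos)
  calc ∑ j ∈ Finset.univ.filter (fun j => ¬ x j < x' j),
      a j * (x j + lam / Asum + (1 - lam) * x' j * (if x j < x' j then (1:ℝ) else 0) / W)
      ≤ 2 + lam := hLHS
    _ = ((2 + lam) / D) * D := by rw [div_mul_cancel₀ _ (ne_of_gt hDpos)]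
    _ ≤ ((2 + lam) / D) * ∑ j ∈ S,
        a j * (x j + lam / Asum + (1 - lam) * x' j * (if x j < x' j then (1:ℝ) else 0) / W) :=
      mul_le_mul_of_nonneg_left hRHS hfactor
end

section
/- Let n ≥ 1 be an integer, let a, x, x̂ ∈ ℝ^n have all entries nonnegative, and let a^max ∈ ℝ^n have all entries positive with a_j ≤ a^max_j for every j. Assume Σ_{j=1}^n a_j x_j < 1. Suppose that for every j ∈ {1,…,n}: if x_j ≥ 1/(2n·a^max_j) then x̂_j < (3/2)·x_j, and if x_j < 1/(2n·a^max_j) then x̂_j < 1/(2n·a^max_j). Then Σ_{j=1}^n a_j x̂_j < 2. -/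
/-- Lemma driving the bound on the number of violating constraints for the online
covering LP algorithm: if `Σ_j a_j x_j < 1` and after the update no large coordinate
(`x_j ≥ 1/(2n·a^max_j)`) grows by a factor `3/2` and no small coordinate becomes large,
then the updated solution still satisfies `Σ_j a_j x̂_j < 2`. -/
theorem stmt11 (n : ℕ) (hn : 1 ≤ n) (a x xh amax : Fin n → ℝ)
    (ha : ∀ j, 0 ≤ a j) (hx : ∀ j, 0 ≤ x j) (hxh : ∀ j, 0 ≤ xh j)
    (hamax_pos : ∀ j, 0 < amax j) (hle : ∀ j, a j ≤ amax j)
    (hviol : ∑ j, a j * x j < 1)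
    (hgrow : ∀ j, (1 / (2 * (n : ℝ) * amax j) ≤ x j → xh j < (3 / 2) * x j) ∧
        (x j < 1 / (2 * (n : ℝ) * amax j) → xh j < 1 / (2 * (n : ℝ) * amax j))) :
    ∑ j, a j * xh j < 2 := by
  have hn' : (0 : ℝ) < n := by exact_mod_cast Nat.lt_of_lt_of_le Nat.zero_lt_one hn
  have key : ∀ j, a j * xh j ≤ (3 / 2) * (a j * x j) + 1 / (2 * (n : ℝ)) := by
    intro j
    rcases le_or_gt (1 / (2 * (n : ℝ) * amax j)) (x j) with h | h
    · have h1 := (hgrow j).1 h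
      have : a j * xh j ≤ a j * ((3 / 2) * x j) :=
        mul_le_mul_of_nonneg_left h1.le (ha j)
      have hpn : (0:ℝ) < 1 / (2 * (n : ℝ)) := by positivity
      nlinarith [hpn]
    · have h2 := (hgrow j).2 h
      have hb : a j * xh j ≤ a j * (1 / (2 * (n : ℝ) * amax j)) :=
        mul_le_mul_of_nonneg_left h2.le (ha j)
      have hpos : 0 < 2 * (n : ℝ) * amax j :=
        mul_pos (mul_pos (by norm_num) hn') (hamax_pos j)
      have : a j * (1 / (2 * (n : ℝ) * amax j)) ≤ 1 / (2 * (n : ℝ)) := by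
        rw [mul_one_div, div_le_div_iff₀ hpos (by positivity)]
        nlinarith [hle j]
      nlinarith [mul_nonneg (ha j) (hx j)]
  calc ∑ j, a j * xh j ≤ ∑ j, ((3 / 2) * (a j * x j) + 1 / (2 * (n : ℝ))) :=
        Finset.sum_le_sum fun j _ => key j
    _ = (3 / 2) * ∑ j, a j * x j + (n : ℝ) * (1 / (2 * (n : ℝ))) := by
        rw [Finset.sum_add_distrib, Finset.mul_sum, Finset.sum_const, Finset.card_univ,
          Fintype.card_fin, nsmul_eq_mul]
    _ < 2 := by
        have : (n : ℝ) * (1 / (2 * (n : ℝ))) = 1 / 2 := by field_simp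
        rw [this]; linarith
end

section
/- Let n ≥ 1 be an integer, let a, x, x̂ ∈ ℝ^n have all entries nonnegative, and let T ⊆ {1,…,n}. Set R := 1 − Σ_{j∈T} a_j and assume R > 0. Let s > 0 satisfy Σ_{j∉T} a_j ≤ s·R, and assume Σ_{j∉T} a_j x_j < R. Suppose that for every j ∉ T: if x_j ≥ 1/(2s) then x̂_j < (3/2)·x_j, and if x_j < 1/(2s) then x̂_j < 1/(2s). Then Σ_{j∉T} a_j x̂_j ≤ 2R. -/
/-- Lemma driving the bound on the number of violating constraints for the online
covering LP algorithm with box constraints: `T` is the tight set,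
`R = 1 − Σ_{j∈T} a_j > 0` the remaining capacity, `s` the sparsity bound; if before the
update the cost outside the tight set is below `R` and after the update no large
coordinate (`x_j ≥ 1/(2s)`) grows by a factor `3/2` and no small coordinate becomes
large, then the updated cost outside the tight set is at most `2R`. -/
theorem stmt12 (n : ℕ) (hn : 1 ≤ n) (a x xh : Fin n → ℝ) (T : Finset (Fin n))
    (ha : ∀ j, 0 ≤ a j) (hx : ∀ j, 0 ≤ x j) (hxh : ∀ j, 0 ≤ xh j)
    (hR : 0 < 1 - ∑ j ∈ T, a j)
    (s : ℝ) (hs : 0 < s)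
    (hsp : ∑ j ∈ Tᶜ, a j ≤ s * (1 - ∑ j ∈ T, a j))
    (hviol : ∑ j ∈ Tᶜ, a j * x j < 1 - ∑ j ∈ T, a j)
    (hgrow : ∀ j ∈ Tᶜ, (1 / (2 * s) ≤ x j → xh j < (3 / 2) * x j) ∧
        (x j < 1 / (2 * s) → xh j < 1 / (2 * s))) :
    ∑ j ∈ Tᶜ, a j * xh j ≤ 2 * (1 - ∑ j ∈ T, a j) := by
  set R := 1 - ∑ j ∈ T, a j with hRdef
  have key : ∀ j ∈ Tᶜ, a j * xh j ≤ (3/2) * (a j * x j) + (1/(2*s)) * a j := by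
    intro j hj
    have h := hgrow j hj
    rcases le_or_gt (1/(2*s)) (x j) with hc | hc
    · have := h.1 hc
      nlinarith [ha j, hx j, mul_pos (by norm_num : (0:ℝ) < 2) hs,
        one_div_pos.mpr (mul_pos (by norm_num : (0:ℝ) < 2) hs)]
    · have := h.2 hc
      nlinarith [ha j, hx j, mul_nonneg (ha j) (hx j)]
  calc ∑ j ∈ Tᶜ, a j * xh j
      ≤ ∑ j ∈ Tᶜ, ((3/2) * (a j * x j) + (1/(2*s)) * a j) :=
        Finset.sum_le_sum key
    _ = (3/2) * ∑ j ∈ Tᶜ, a j * x j + (1/(2*s)) * ∑ j ∈ Tᶜ, a j := by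
        rw [Finset.sum_add_distrib, Finset.mul_sum, Finset.mul_sum]
    _ ≤ 2 * R := by
        have h1 : (1/(2*s)) * ∑ j ∈ Tᶜ, a j ≤ (1/(2*s)) * (s * R) :=
          mul_le_mul_of_nonneg_left hsp (by positivity)
        have : (1/(2*s)) * (s * R) = R / 2 := by field_simp
        nlinarith
end

section
/- Let n ≥ 1 be an integer, let a, x, x' ∈ ℝ^n have all entries nonnegative, let λ ∈ [0,1), and let T ⊆ {1,…,n}. Set R := 1 − Σ_{j∈T} a_j and assume R > 0. Let Σ' := Σ_{k∉T} a_k, S := {j ∉ T : x_j < x'_j}, and W := Σ_{k∈S} a_k x'_k. Assume Σ_{j∉T} a_j x_j < 2R, Σ' > 0, and W > 0. For each j ∉ T define T_j := a_j · ( x_j + ( λ/Σ' + (1−λ)·x'_j·[j ∈ S]/W )·R ), where [j ∈ S] equals 1 if j ∈ S and 0 otherwise. Then Σ_{j∉T, j∉S} T_j ≤ (2+λ)·R, Σ_{j∈S} T_j ≥ (1−λ)·R, and consequently Σ_{j∉T, j∉S} T_j ≤ ( (2+λ)/(1−λ) ) · Σ_{j∈S} T_j. -/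
/-- Consistency argument for the primal–dual learning-augmented covering LP algorithm
with box constraints: with `T` the tight set, `R = 1 − Σ_{j∈T} a_j > 0` the remaining
capacity and `S = {j ∉ T : x_j < x'_j}`, the growth rate not credited to the advice is
at most `(2+λ)·R`, the growth rate credited to the advice is at least `(1−λ)·R`, and
consequently the former is at most `(2+λ)/(1−λ)` times the latter. -/
theorem stmt18 (n : ℕ) (hn : 1 ≤ n) (a x x' : Fin n → ℝ)
    (ha : ∀ j, 0 ≤ a j) (hx : ∀ j, 0 ≤ x j) (hx' : ∀ j, 0 ≤ x' j)
    (lam : ℝ) (hlam0 : 0 ≤ lam) (hlam1 : lam < 1)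
    (T : Finset (Fin n))
    (hR : 0 < 1 - ∑ j ∈ T, a j)
    (hSig : 0 < ∑ k ∈ Tᶜ, a k)
    (hW : 0 < ∑ k ∈ Tᶜ.filter (fun k => x k < x' k), a k * x' k)
    (hcov : ∑ j ∈ Tᶜ, a j * x j < 2 * (1 - ∑ j ∈ T, a j)) :
    (∑ j ∈ Tᶜ.filter (fun j => ¬ x j < x' j),
        a j * (x j +
          (lam / (∑ k ∈ Tᶜ, a k) +
            (1 - lam) * x' j *
              (if j ∈ Tᶜ.filter (fun k => x k < x' k) then (1 : ℝ) else 0) /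
              (∑ k ∈ Tᶜ.filter (fun k => x k < x' k), a k * x' k)) *
            (1 - ∑ k ∈ T, a k)) ≤
      (2 + lam) * (1 - ∑ j ∈ T, a j)) ∧
    ((1 - lam) * (1 - ∑ j ∈ T, a j) ≤
      ∑ j ∈ Tᶜ.filter (fun j => x j < x' j),
        a j * (x j +
          (lam / (∑ k ∈ Tᶜ, a k) +
            (1 - lam) * x' j *
              (if j ∈ Tᶜ.filter (fun k => x k < x' k) then (1 : ℝ) else 0) /
              (∑ k ∈ Tᶜ.filter (fun k => x k < x' k), a k * x' k)) *
            (1 - ∑ k ∈ T, a k))) ∧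
    (∑ j ∈ Tᶜ.filter (fun j => ¬ x j < x' j),
        a j * (x j +
          (lam / (∑ k ∈ Tᶜ, a k) +
            (1 - lam) * x' j *
              (if j ∈ Tᶜ.filter (fun k => x k < x' k) then (1 : ℝ) else 0) /
              (∑ k ∈ Tᶜ.filter (fun k => x k < x' k), a k * x' k)) *
            (1 - ∑ k ∈ T, a k)) ≤
      ((2 + lam) / (1 - lam)) *
        ∑ j ∈ Tᶜ.filter (fun j => x j < x' j),
          a j * (x j +
            (lam / (∑ k ∈ Tᶜ, a k) +
              (1 - lam) * x' j *
                (if j ∈ Tᶜ.filter (fun k => x k < x' k) then (1 : ℝ) else 0) /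
                (∑ k ∈ Tᶜ.filter (fun k => x k < x' k), a k * x' k)) *
              (1 - ∑ k ∈ T, a k))) := by

  set Sig := ∑ k ∈ Tᶜ, a k with hSigdef
  set S := Tᶜ.filter (fun k => x k < x' k) with hSdef
  set W := ∑ k ∈ S, a k * x' k with hWdef
  set R := 1 - ∑ j ∈ T, a j with hRdef
  have hF1 : ∀ j ∈ Tᶜ.filter (fun j => ¬ x j < x' j),
      a j * (x j + (lam / Sig + (1 - lam) * x' j * (if j ∈ S then (1:ℝ) else 0) / W) * R)
        = a j * x j + lam / Sig * R * a j := by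
    intro j hj
    have hjS : j ∉ S := by
      simp only [hSdef, Finset.mem_filter] at hj ⊢
      tauto
    rw [if_neg hjS]; ring
  have hsub1 : ∑ j ∈ Tᶜ.filter (fun j => ¬ x j < x' j), a j * x j ≤ ∑ j ∈ Tᶜ, a j * x j :=
    Finset.sum_le_sum_of_subset_of_nonneg (Finset.filter_subset _ _)
      (fun i _ _ => mul_nonneg (ha i) (hx i))
  have hsub2 : ∑ j ∈ Tᶜ.filter (fun j => ¬ x j < x' j), a j ≤ Sig :=
    Finset.sum_le_sum_of_subset_of_nonneg (Finset.filter_subset _ _) (fun i _ _ => ha i)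
  have h1 : ∑ j ∈ Tᶜ.filter (fun j => ¬ x j < x' j),
      a j * (x j + (lam / Sig + (1 - lam) * x' j * (if j ∈ S then (1:ℝ) else 0) / W) * R)
      ≤ (2 + lam) * R := by
    rw [Finset.sum_congr rfl hF1, Finset.sum_add_distrib, ← Finset.mul_sum]
    have hq : lam / Sig * R * (∑ j ∈ Tᶜ.filter (fun j => ¬ x j < x' j), a j)
        ≤ lam / Sig * R * Sig := by
      apply mul_le_mul_of_nonneg_left hsub2
      exact mul_nonneg (div_nonneg hlam0 hSig.le) hR.le
    have heq : lam / Sig * R * Sig = lam * R := by field_simp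
    nlinarith [hsub1, hcov]
  have hF2 : ∀ j ∈ S, a j * ((1 - lam) * x' j / W * R)
      ≤ a j * (x j + (lam / Sig + (1 - lam) * x' j * (if j ∈ S then (1:ℝ) else 0) / W) * R) := by
    intro j hj
    rw [if_pos hj]
    have h0 : 0 ≤ a j * (x j + lam / Sig * R) :=
      mul_nonneg (ha j) (add_nonneg (hx j) (mul_nonneg (div_nonneg hlam0 hSig.le) hR.le))
    have hdiff : a j * (x j + (lam / Sig + (1 - lam) * x' j * 1 / W) * R)
        - a j * ((1 - lam) * x' j / W * R) = a j * (x j + lam / Sig * R) := by ring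
    linarith
  have h2 : (1 - lam) * R ≤ ∑ j ∈ S,
      a j * (x j + (lam / Sig + (1 - lam) * x' j * (if j ∈ S then (1:ℝ) else 0) / W) * R) := by
    have heq : ∑ j ∈ S, a j * ((1 - lam) * x' j / W * R) = (1 - lam) * R := by
      have : ∑ j ∈ S, a j * ((1 - lam) * x' j / W * R)
          = ((1 - lam) * R / W) * ∑ j ∈ S, a j * x' j := by
        rw [Finset.mul_sum]
        exact Finset.sum_congr rfl fun j _ => by ring
      rw [this, ← hWdef]
      field_simp
    calc (1 - lam) * R = ∑ j ∈ S, a j * ((1 - lam) * x' j / W * R) := heq.symm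
      _ ≤ _ := Finset.sum_le_sum hF2
  refine ⟨h1, h2, ?_⟩
  have hpos : 0 < 1 - lam := by linarith
  calc _ ≤ (2 + lam) * R := h1
    _ = ((2 + lam) / (1 - lam)) * ((1 - lam) * R) := by field_simp
    _ ≤ _ := by
        apply mul_le_mul_of_nonneg_left h2
        positivity
end

section
/- Let m, n ≥ 1 be integers, let a_1,…,a_m ∈ ℝ^n be nonzero vectors with nonnegative entries, let c ∈ ℝ^n have all entries positive, let x' ∈ ℝ^n have all entries nonnegative, and let γ ≥ 1. For each i ≤ m let OPT_i := inf { c·z : z ∈ ℝ^n, z ≥ 0, ⟨a_k, z⟩ ≥ 1 for all k ≤ i }. Suppose x^{(1)} ≤ x^{(2)} ≤ … ≤ x^{(m)} is a coordinatewise nondecreasing sequence of vectors in ℝ^n with all entries nonnegative such that ⟨a_k, x^{(i)}⟩ ≥ 1 for all k ≤ i ≤ m and c·x^{(i)} ≤ γ·OPT_i for every i ≤ m. Then there exists a coordinatewise nondecreasing sequence x̂^{(1)} ≤ … ≤ x̂^{(m)} of vectors in ℝ^n with all entries nonnegative such that ⟨a_k, x̂^{(i)}⟩ ≥ 1 for all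 k ≤ i ≤ m, c·x̂^{(m)} ≤ 3γ·OPT_m, and moreover, if ⟨a_k, x'⟩ ≥ 1 for all k ≤ m, then also c·x̂^{(m)} ≤ 2·(c·x'). -/
/-- Simple learning-augmented combiner (Appendix B): given any monotone online solution
for an online covering LP that is `γ`-competitive at every round, and a possibly
infeasible advice vector `x'`, there is a monotone feasible online solution that is
`3γ`-competitive at the end and, when the advice is feasible, additionally has cost at
most twice the cost of the advice. Rows are `a 0, …, a (m−1)`; `x i` for `1 ≤ i ≤ m`
is the solution after the first `i` rows, and `OPT_i` is formalized as the infimum of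
the cost over nonnegative feasible solutions of the first `i` constraints. -/
theorem stmt19 (m n : ℕ) (hm : 1 ≤ m) (hn : 1 ≤ n)
    (a : ℕ → Fin n → ℝ)
    (ha_nonneg : ∀ k, k < m → ∀ j, 0 ≤ a k j)
    (ha_ne : ∀ k, k < m → a k ≠ 0)
    (c : Fin n → ℝ) (hc : ∀ j, 0 < c j)
    (x' : Fin n → ℝ) (hx' : ∀ j, 0 ≤ x' j)
    (γ : ℝ) (hγ : 1 ≤ γ)
    (x : ℕ → Fin n → ℝ)
    (hxnn : ∀ i, 1 ≤ i → i ≤ m → ∀ j, 0 ≤ x i j)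
    (hmono : ∀ i, 1 ≤ i → i < m → ∀ j, x i j ≤ x (i + 1) j)
    (hfeas : ∀ i, 1 ≤ i → i ≤ m → ∀ k, k < i → 1 ≤ ∑ j, a k j * x i j)
    (hcomp : ∀ i, 1 ≤ i → i ≤ m →
      ∑ j, c j * x i j ≤ γ * sInf {v : ℝ | ∃ z : Fin n → ℝ, (∀ j, 0 ≤ z j) ∧
        (∀ k, k < i → 1 ≤ ∑ j, a k j * z j) ∧ v = ∑ j, c j * z j}) :
    ∃ xh : ℕ → Fin n → ℝ,
      (∀ i, 1 ≤ i → i ≤ m → ∀ j, 0 ≤ xh i j) ∧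
      (∀ i, 1 ≤ i → i < m → ∀ j, xh i j ≤ xh (i + 1) j) ∧
      (∀ i, 1 ≤ i → i ≤ m → ∀ k, k < i → 1 ≤ ∑ j, a k j * xh i j) ∧
      (∑ j, c j * xh m j ≤ 3 * γ * sInf {v : ℝ | ∃ z : Fin n → ℝ, (∀ j, 0 ≤ z j) ∧
        (∀ k, k < m → 1 ≤ ∑ j, a k j * z j) ∧ v = ∑ j, c j * z j}) ∧
      ((∀ k, k < m → 1 ≤ ∑ j, a k j * x' j) →
        ∑ j, c j * xh m j ≤ 2 * ∑ j, c j * x' j) := by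
  set S : Set ℝ := {v : ℝ | ∃ z : Fin n → ℝ, (∀ j, 0 ≤ z j) ∧
      (∀ k, k < m → 1 ≤ ∑ j, a k j * z j) ∧ v = ∑ j, c j * z j} with hS
  have hS0 : ∀ v ∈ S, (0:ℝ) ≤ v := by
    rintro v ⟨z, hz, -, rfl⟩
    exact Finset.sum_nonneg fun j _ => mul_nonneg (hc j).le (hz j)
  have hmem : (∑ j, c j * x m j) ∈ S :=
    ⟨x m, hxnn m hm le_rfl, hfeas m hm le_rfl, rfl⟩
  have hInf0 : (0:ℝ) ≤ sInf S := le_csInf ⟨_, hmem⟩ hS0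
  have hγ0 : (0:ℝ) < γ := lt_of_lt_of_le one_pos hγ
  have hxm : ∑ j, c j * x m j ≤ γ * sInf S := hcomp m hm le_rfl
  have h3 : γ * sInf S ≤ 3 * γ * sInf S := by nlinarith
  by_cases hfx' : ∀ k, k < m → 1 ≤ ∑ j, a k j * x' j
  · by_cases hcost : ∑ j, c j * x m j ≤ ∑ j, c j * x' j
    · refine ⟨x, hxnn, hmono, hfeas, hxm.trans h3, fun _ => ?_⟩
      have hx'0 : 0 ≤ ∑ j, c j * x' j :=
        Finset.sum_nonneg fun j _ => mul_nonneg (hc j).le (hx' j)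
      linarith
    · refine ⟨fun _ => x', fun _ _ _ j => hx' j, fun _ _ _ _ => le_rfl,
        fun i _ hi k hk => hfx' k (lt_of_lt_of_le hk hi), ?_, fun _ => ?_⟩
      · have := le_of_not_ge hcost
        linarith
      · have hx'0 : 0 ≤ ∑ j, c j * x' j :=
          Finset.sum_nonneg fun j _ => mul_nonneg (hc j).le (hx' j)
        linarith
  · exact ⟨x, hxnn, hmono, hfeas, hxm.trans h3, fun h => absurd h hfx'⟩
end
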